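/- arXiv:1912.05522 — 10 statements merged into one kernel-verified Lean document; each statement's English description precedes it below -/
import Mathlib

section
/- Let U be a k-dimensional F_q-subspace of F_{q^n} such that all distinct subspaces in the orbit Orb(U) intersect trivially (i.e., dim(U ∩ αU) ∈ {0, k} for all α ∈ F_{q^n}^*). Then Stab(U) = F_{q^k}^*, and U = aF_{q^k} for some a ∈ F_{q^n}^*; in particular k divides n. -/
open Pointwise

/-- If all distinct subspaces in `Orb(U)` intersect trivially (spread code case),
then `Stab(U) = F_{q^k}^*` and `U = a·F_{q^k}` for some `a`; in particular `k ∣ n`. -/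
theorem stmt_3 (F K : Type) [Field F] [Field K] [Algebra F K]
    [Fintype F] [Fintype K] (q n k : ℕ)
    (hq : Fintype.card F = q) (hn : Module.finrank F K = n)
    (U : Submodule F K) (hk : Module.finrank F U = k) (hkpos : 0 < k)
    (htriv : ∀ α : K, α ≠ 0 →
      Module.finrank F ↥(U ⊓ Submodule.map (LinearMap.mulLeft F α) U) = 0 ∨
      Module.finrank F ↥(U ⊓ Submodule.map (LinearMap.mulLeft F α) U) = k) :
    ∃ E : Subfield K, Nat.card E = q ^ k ∧
      {α : K | α ≠ 0 ∧ Submodule.map (LinearMap.mulLeft F α) U = U}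
        = {α : K | α ∈ E ∧ α ≠ 0} ∧
      (∃ a : K, a ≠ 0 ∧ (U : Set K) = a • (E : Set K)) ∧
      k ∣ n := by
  classical
  obtain ⟨a, haU, ha0⟩ : ∃ a ∈ U, a ≠ 0 := by
    apply Submodule.exists_mem_ne_zero_of_ne_bot
    intro h
    rw [h, finrank_bot] at hk
    omega
  have hrank : ∀ e : K, e ≠ 0 →
      Module.finrank F ↥(Submodule.map (LinearMap.mulLeft F e) U) = k := by
    intro e he
    let f : K ≃ₗ[F] K := LinearEquiv.ofLinear (LinearMap.mulLeft F e)
      (LinearMap.mulLeft F e⁻¹)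
      (by ext x; simp [LinearMap.mulLeft_apply, ← mul_assoc, mul_inv_cancel₀ he])
      (by ext x; simp [LinearMap.mulLeft_apply, ← mul_assoc, inv_mul_cancel₀ he])
    have : Submodule.map (LinearMap.mulLeft F e) U = Submodule.map (f : K →ₗ[F] K) U := rfl
    rw [this, LinearEquiv.finrank_map_eq, hk]
  have key : ∀ e : K, e ≠ 0 → e * a ∈ U →
      Submodule.map (LinearMap.mulLeft F e) U = U := by
    intro e he hea
    have hmem : e * a ∈ U ⊓ Submodule.map (LinearMap.mulLeft F e) U :=
      ⟨hea, ⟨a, haU, rfl⟩⟩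
    have hne : U ⊓ Submodule.map (LinearMap.mulLeft F e) U ≠ ⊥ := by
      intro h
      rw [h, Submodule.mem_bot] at hmem
      exact mul_ne_zero he ha0 hmem
    have hr : Module.finrank F ↥(U ⊓ Submodule.map (LinearMap.mulLeft F e) U) = k := by
      rcases htriv e he with h | h
      · exact absurd (Submodule.finrank_eq_zero.mp h) hne
      · exact h
    have h1 : U ⊓ Submodule.map (LinearMap.mulLeft F e) U = U :=
      Submodule.eq_of_le_of_finrank_eq inf_le_left (by rw [hr, hk])
    have h2 : U ⊓ Submodule.map (LinearMap.mulLeft F e) U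
        = Submodule.map (LinearMap.mulLeft F e) U :=
      Submodule.eq_of_le_of_finrank_eq inf_le_right (by rw [hr, hrank e he])
    rw [← h2, h1]
  let E : Subfield K :=
    { carrier := {x : K | a * x ∈ U}
      zero_mem' := by simp
      one_mem' := by simpa using haU
      add_mem' := fun hx hy => by simpa [mul_add] using U.add_mem hx hy
      neg_mem' := fun hx => by simpa [mul_neg] using U.neg_mem hx
      mul_mem' := by
        intro x y hx hy
        rcases eq_or_ne x 0 with rfl | hx0
        · simp
        · have hst := key x hx0 (by rwa [mul_comm])
          have hxy : a * (x * y) = x * (a * y) := by ring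
          rw [Set.mem_setOf_eq, hxy, ← hst]
          exact ⟨a * y, hy, rfl⟩
      inv_mem' := by
        intro x hx
        rcases eq_or_ne x 0 with rfl | hx0
        · simp
        · have hst := key x hx0 (by rwa [mul_comm])
          have hmem : a * x⁻¹ ∈ Submodule.map (LinearMap.mulLeft F x⁻¹) U :=
            ⟨a, haU, by rw [LinearMap.mulLeft_apply, mul_comm]⟩
          have hinv : Submodule.map (LinearMap.mulLeft F x⁻¹) U = U := by
            conv_lhs => rw [← hst]
            rw [← Submodule.map_comp, ← LinearMap.mulLeft_mul,
              inv_mul_cancel₀ hx0, LinearMap.mulLeft_one, Submodule.map_id]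
          rwa [hinv] at hmem }
  have hmemE : ∀ x : K, x ∈ E ↔ a * x ∈ U := fun x => Iff.rfl
  have hcard : Nat.card E = q ^ k := by
    have hequiv : E ≃ U :=
      { toFun := fun x => ⟨a * x.1, x.2⟩
        invFun := fun u => ⟨a⁻¹ * u.1, by
          show a * (a⁻¹ * u.1) ∈ U
          simp only [← mul_assoc, mul_inv_cancel₀ ha0, one_mul]
          exact u.2⟩
        left_inv := fun x => by
          ext; simp [← mul_assoc, inv_mul_cancel₀ ha0]
        right_inv := fun u => by
          ext; simp [← mul_assoc, mul_inv_cancel₀ ha0] }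
    have h1 : Nat.card E = Nat.card U := Nat.card_eq_of_bijective _ hequiv.bijective
    have : Fintype U := Fintype.ofFinite _
    rw [h1, Nat.card_eq_fintype_card, Module.card_eq_pow_finrank (K := F) (V := U), hq, hk]
  refine ⟨E, hcard, ?_, ?_, ?_⟩
  · ext α
    simp only [Set.mem_setOf_eq, hmemE]
    constructor
    · rintro ⟨hα, hst⟩
      refine ⟨?_, hα⟩
      rw [← hst]
      exact ⟨a, haU, by rw [LinearMap.mulLeft_apply, mul_comm]⟩
    · rintro ⟨hα, hα0⟩
      exact ⟨hα0, key α hα0 (by rwa [mul_comm])⟩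
  · refine ⟨a, ha0, ?_⟩
    ext x
    simp only [SetLike.mem_coe, Set.mem_smul_set]
    constructor
    · intro hx
      refine ⟨a⁻¹ * x, ?_, ?_⟩
      · show a * (a⁻¹ * x) ∈ U
        rwa [← mul_assoc, mul_inv_cancel₀ ha0, one_mul]
      · simp [smul_eq_mul, ← mul_assoc, mul_inv_cancel₀ ha0]
    · rintro ⟨y, hy, rfl⟩
      exact hy
  · have hq2 : 2 ≤ q := by rw [← hq]; exact Fintype.one_lt_card
    have : Fintype E := Fintype.ofFinite _
    have hcK : Fintype.card K = q ^ n := by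
      rw [Module.card_eq_pow_finrank (K := F) (V := K), hq, hn]
    have hcK2 : Fintype.card K = Fintype.card E ^ Module.finrank E K :=
      Module.card_eq_pow_finrank (K := E) (V := K)
    have hcE : Fintype.card E = q ^ k := by
      rw [← Nat.card_eq_fintype_card, hcard]
    rw [hcK, hcE, ← pow_mul] at hcK2
    have := Nat.pow_right_injective hq2 hcK2
    exact ⟨Module.finrank E K, this⟩
end

section
/- Let U be a k-dimensional F_q-subspace of F_{q^n} and let F(U) = {uv^{-1}F_q^* : u,v ∈ U∖0} be its set of fractions in projective space. Then |F(U)| ≥ (q^k−1)/(q−1), with equality if and only if U = aF_{q^k} for some a ∈ F_{q^n}^* (in particular k divides n). -/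
/-!
Every `v⁻¹U` with `v ∈ U ∖ 0` is a `k`-dimensional subspace all of whose lines are fractions of
`U`, so `F(U)` contains at least the `(q^k - 1)/(q - 1)` points of its projectivization. In case
of equality each of these subspaces has exactly the fractions as its lines, so they all coincide
with `V = v₀⁻¹U`; then `x⁻¹V = V` for every nonzero `x ∈ V`, which makes `V` a subfield with
`U = v₀V`. Conversely, if `U = aE` for a subfield `E`, every fraction lies in `E = a⁻¹U`.
-/

open Pointwise
open scoped LinearAlgebra.Projectivization

namespace Subfield

theorem dvd_of_natCard_eq_pow {K : Type*} [Field K] [Finite K] {q k n : ℕ} (hq : 2 ≤ q)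
    {E : Subfield K} (hE : Nat.card E = q ^ k) (hK : Nat.card K = q ^ n) : k ∣ n := by
  rw [Module.natCard_eq_pow_finrank (K := E), hE, ← pow_mul] at hK
  exact ⟨_, (Nat.pow_right_injective hq hK).symm⟩

end Subfield

namespace Submodule

variable {R V : Type*} [Field R] [AddCommGroup V] [Module R V]

def lines (W : Submodule R V) : Set (Submodule R V) :=
  {P | ∃ u ∈ W, u ≠ 0 ∧ P = R ∙ u}

theorem lines_eq_range (W : Submodule R V) :
    W.lines = Set.range fun p : ℙ R W => p.submodule.map W.subtype := by
  ext P
  constructor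
  · rintro ⟨u, hu, hu0, rfl⟩
    refine ⟨.mk R ⟨u, hu⟩ (by simpa using hu0), ?_⟩
    simp [Projectivization.submodule_mk, map_span]
  · rintro ⟨p, rfl⟩
    induction p using Projectivization.ind with
    | h w hw =>
      exact ⟨w, w.2, by simpa using hw, by simp [Projectivization.submodule_mk, map_span]⟩

theorem natCard_lines [Finite R] {W : Submodule R V} {d : ℕ} (hW : Module.finrank R W = d) :
    Nat.card W.lines = (Nat.card R ^ d - 1) / (Nat.card R - 1) := by
  rw [lines_eq_range, Nat.card_range_of_injective, Projectivization.card_of_finrank R W hW,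
    Nat.geomSum_eq Finite.one_lt_card]
  exact (map_injective_of_injective W.subtype_injective).comp Projectivization.submodule_injective

theorem le_of_lines_subset_lines {W₁ W₂ : Submodule R V} (h : W₁.lines ⊆ W₂.lines) :
    W₁ ≤ W₂ := by
  intro x hx
  rcases eq_or_ne x 0 with rfl | hx0
  · exact W₂.zero_mem
  obtain ⟨y, hy, -, hxy⟩ := h ⟨x, hx, hx0, rfl⟩
  exact span_singleton_le_iff_mem y W₂ |>.mpr hy (hxy ▸ mem_span_singleton_self x)

theorem lines_injective : Function.Injective (lines (R := R) (V := V)) := fun _ _ h =>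
  (le_of_lines_subset_lines h.le).antisymm (le_of_lines_subset_lines h.ge)

theorem finrank_pointwise_smul {α : Type*} [GroupWithZero α] [DistribMulAction α V]
    [SMulCommClass α R V] {a : α} (ha : a ≠ 0) (W : Submodule R V) :
    Module.finrank R ↥(a • W) = Module.finrank R W :=
  (W.equivMapOfInjective (DistribSMul.toLinearMap R V a)
    (MulAction.injective₀ ha)).finrank_eq.symm

section Field

variable {F K : Type*} [Field F] [Field K] [Algebra F K]

/-- The paper's `F(U)`, each fraction `uv⁻¹F_q^*` being encoded by the line it spans. -/
def fractionLines (U : Submodule F K) : Set (Submodule F K) :=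
  {W | ∃ u v : K, u ∈ U ∧ v ∈ U ∧ u ≠ 0 ∧ v ≠ 0 ∧ W = Submodule.span F {u * v⁻¹}}

theorem mem_inv_smul_iff_mul_mem {v : K} (hv : v ≠ 0) {U : Submodule F K} {x : K} :
    x ∈ v⁻¹ • U ↔ v * x ∈ U := by
  rw [← SetLike.mem_coe, coe_pointwise_smul, Set.mem_inv_smul_set_iff₀ hv,
    smul_eq_mul, SetLike.mem_coe]

theorem lines_inv_smul_subset_fractionLines {U : Submodule F K} {v : K} (hv : v ∈ U)
    (hv0 : v ≠ 0) : (v⁻¹ • U).lines ⊆ fractionLines U := by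
  rintro _ ⟨x, hx, hx0, rfl⟩
  refine ⟨v * x, v, (mem_inv_smul_iff_mul_mem hv0).mp hx, hv, mul_ne_zero hv0 hx0, hv0, ?_⟩
  rw [mul_comm, inv_mul_cancel_left₀ hv0]

theorem fractionLines_subset_lines {U : Submodule F K} {E : Subfield K} {a : K} (ha : a ≠ 0)
    (hU : (U : Set K) = a • (E : Set K)) : fractionLines U ⊆ (a⁻¹ • U).lines := by
  have hE : ((a⁻¹ • U : Submodule F K) : Set K) = E := by
    rw [coe_pointwise_smul, hU, inv_smul_smul₀ ha]
  rintro _ ⟨u, v, hu, hv, hu0, hv0, rfl⟩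
  rw [← SetLike.mem_coe, hU] at hu hv
  obtain ⟨e, he, rfl⟩ := hu
  obtain ⟨f, hf, rfl⟩ := hv
  refine ⟨e * f⁻¹, ?_, ?_, ?_⟩
  · rw [← SetLike.mem_coe, hE]
    exact E.mul_mem he (E.inv_mem hf)
  · simp_all
  · congr 1
    simp only [smul_eq_mul]
    field_simp

theorem natCard_lines_inv_smul [Finite F] (U : Submodule F K) {v : K} (hv0 : v ≠ 0) :
    Nat.card (v⁻¹ • U).lines = Nat.card U.lines := by
  rw [natCard_lines (finrank_pointwise_smul (inv_ne_zero hv0) U), natCard_lines rfl]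

theorem mul_mem_inv_smul_of_forall_inv_smul_eq {U : Submodule F K} {v₀ : K} (hv₀0 : v₀ ≠ 0)
    (hU : ∀ v ∈ U, v ≠ 0 → v⁻¹ • U = v₀⁻¹ • U) {x y : K} (hx : x ∈ v₀⁻¹ • U)
    (hy : y ∈ v₀⁻¹ • U) : x * y ∈ v₀⁻¹ • U := by
  rcases eq_or_ne y 0 with rfl | hy0
  · simp
  have hyU : v₀ * y ∈ U := (mem_inv_smul_iff_mul_mem hv₀0).mp hy
  rw [← hU _ hyU (mul_ne_zero hv₀0 hy0), mem_inv_smul_iff_mul_mem (mul_ne_zero hv₀0 hy0)] at hx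
  rw [mem_inv_smul_iff_mul_mem hv₀0, mul_comm x, ← mul_assoc]
  exact hx

theorem inv_mem_inv_smul_of_forall_inv_smul_eq {U : Submodule F K} {v₀ : K} (hv₀ : v₀ ∈ U)
    (hv₀0 : v₀ ≠ 0) (hU : ∀ v ∈ U, v ≠ 0 → v⁻¹ • U = v₀⁻¹ • U) {x : K}
    (hx : x ∈ v₀⁻¹ • U) : x⁻¹ ∈ v₀⁻¹ • U := by
  rcases eq_or_ne x 0 with rfl | hx0
  · simp
  have hxU : v₀ * x ∈ U := (mem_inv_smul_iff_mul_mem hv₀0).mp hx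
  rw [← hU _ hxU (mul_ne_zero hv₀0 hx0), mem_inv_smul_iff_mul_mem (mul_ne_zero hv₀0 hx0),
    mul_inv_cancel_right₀ hx0]
  exact hv₀

def subfieldOfForallInvSmulEq {U : Submodule F K} {v₀ : K} (hv₀ : v₀ ∈ U) (hv₀0 : v₀ ≠ 0)
    (hU : ∀ v ∈ U, v ≠ 0 → v⁻¹ • U = v₀⁻¹ • U) : Subfield K where
  carrier := (v₀⁻¹ • U : Submodule F K)
  mul_mem' := mul_mem_inv_smul_of_forall_inv_smul_eq hv₀0 hU
  one_mem' := (mem_inv_smul_iff_mul_mem hv₀0).mpr (by rwa [mul_one])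
  add_mem' := add_mem
  zero_mem' := zero_mem _
  neg_mem' := neg_mem
  inv_mem' _ := inv_mem_inv_smul_of_forall_inv_smul_eq hv₀ hv₀0 hU

variable [Finite F] [Finite K]

theorem natCard_lines_le_natCard_fractionLines {U : Submodule F K} {v : K} (hv : v ∈ U)
    (hv0 : v ≠ 0) : Nat.card U.lines ≤ Nat.card (fractionLines U) :=
  natCard_lines_inv_smul U hv0 ▸
    Nat.card_mono (Set.toFinite _) (lines_inv_smul_subset_fractionLines hv hv0)

theorem inv_smul_eq_inv_smul_of_natCard_fractionLines_le {U : Submodule F K}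
    (hU : Nat.card (fractionLines U) ≤ Nat.card U.lines) {v w : K} (hv : v ∈ U) (hv0 : v ≠ 0)
    (hw : w ∈ U) (hw0 : w ≠ 0) : v⁻¹ • U = w⁻¹ • U := by
  have h : ∀ v ∈ U, v ≠ 0 → (v⁻¹ • U).lines = fractionLines U := fun v hv hv0 =>
    (Set.toFinite _).eq_of_subset_of_card_le (lines_inv_smul_subset_fractionLines hv hv0)
      (natCard_lines_inv_smul U hv0 ▸ hU)
  exact lines_injective ((h v hv hv0).trans (h w hw hw0).symm)

end Field

end Submodule

theorem stmt_6_general (F K : Type) [Field F] [Field K] [Algebra F K]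
    [Fintype F] [Fintype K] (q n k : ℕ)
    (hq : Fintype.card F = q) (hn : Module.finrank F K = n)
    (hk2 : 2 ≤ k)
    (U : Submodule F K) (hk : Module.finrank F U = k) :
    (q ^ k - 1) / (q - 1) ≤
      Nat.card {W : Submodule F K //
        ∃ u v : K, u ∈ U ∧ v ∈ U ∧ u ≠ 0 ∧ v ≠ 0 ∧
          W = Submodule.span F {u * v⁻¹}} ∧
    (Nat.card {W : Submodule F K //
        ∃ u v : K, u ∈ U ∧ v ∈ U ∧ u ≠ 0 ∧ v ≠ 0 ∧
          W = Submodule.span F {u * v⁻¹}} = (q ^ k - 1) / (q - 1) ↔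
      ∃ E : Subfield K, Nat.card E = q ^ k ∧
        (∃ a : K, a ≠ 0 ∧ (U : Set K) = a • (E : Set K)) ∧ k ∣ n) := by
  change _ ≤ Nat.card U.fractionLines ∧ (Nat.card U.fractionLines = _ ↔ _)
  have hq2 : 2 ≤ q := hq ▸ Fintype.one_lt_card
  have hcard : ∀ {d : ℕ} (V : Type) [AddCommGroup V] [Module F V] [Module.Finite F V],
      Module.finrank F V = d → Nat.card V = q ^ d := fun V _ _ _ hV => by
    rw [Module.natCard_eq_pow_finrank (K := F), Nat.card_eq_fintype_card, hq, hV]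
  have hlines : ∀ {W : Submodule F K}, Module.finrank F W = k →
      Nat.card W.lines = (q ^ k - 1) / (q - 1) := fun hW => by
    rw [Submodule.natCard_lines hW, Nat.card_eq_fintype_card, hq]
  obtain ⟨v₀, hv₀, hv₀0⟩ : ∃ v ∈ U, v ≠ 0 :=
    U.ne_bot_iff.mp fun h => by rw [h, finrank_bot] at hk; omega
  have hlower := hlines hk ▸ Submodule.natCard_lines_le_natCard_fractionLines hv₀ hv₀0
  refine ⟨hlower, fun heq => ?_, ?_⟩
  · have hU : ∀ v ∈ U, v ≠ 0 → v⁻¹ • U = v₀⁻¹ • U := fun v hv hv0 =>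
      Submodule.inv_smul_eq_inv_smul_of_natCard_fractionLines_le (heq.trans (hlines hk).symm).le
        hv hv0 hv₀ hv₀0
    have hE : Nat.card (Submodule.subfieldOfForallInvSmulEq hv₀ hv₀0 hU) = q ^ k :=
      hcard (v₀⁻¹ • U : Submodule F K)
        ((Submodule.finrank_pointwise_smul (inv_ne_zero hv₀0) U).trans hk)
    refine ⟨_, hE, ⟨v₀, hv₀0, (smul_inv_smul₀ hv₀0 _).symm⟩,
      Subfield.dvd_of_natCard_eq_pow hq2 hE (hcard K hn)⟩
  · rintro ⟨E, -, ⟨a, ha, hUa⟩, -⟩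
    refine le_antisymm ?_ hlower
    rw [← hlines ((Submodule.finrank_pointwise_smul (inv_ne_zero ha) U).trans hk)]
    exact Nat.card_mono (Set.toFinite _) (Submodule.fractionLines_subset_lines ha hUa)

/-- The number of fractions `f(U) = |{uv⁻¹F_q^* : u,v ∈ U∖0}|` satisfies
`f(U) ≥ (q^k - 1)/(q - 1)`, with equality iff `U = a·F_{q^k}` (so `k ∣ n`). -/
theorem stmt_6 (F K : Type) [Field F] [Field K] [Algebra F K]
    [Fintype F] [Fintype K] (q n k : ℕ)
    (hq : Fintype.card F = q) (hn : Module.finrank F K = n)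
    (hk2 : 2 ≤ k) (hkn : 2 * k ≤ n)
    (U : Submodule F K) (hk : Module.finrank F U = k) :
    (q ^ k - 1) / (q - 1) ≤
      Nat.card {W : Submodule F K //
        ∃ u v : K, u ∈ U ∧ v ∈ U ∧ u ≠ 0 ∧ v ≠ 0 ∧
          W = Submodule.span F {u * v⁻¹}} ∧
    (Nat.card {W : Submodule F K //
        ∃ u v : K, u ∈ U ∧ v ∈ U ∧ u ≠ 0 ∧ v ≠ 0 ∧
          W = Submodule.span F {u * v⁻¹}} = (q ^ k - 1) / (q - 1) ↔
      ∃ E : Subfield K, Nat.card E = q ^ k ∧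
        (∃ a : K, a ≠ 0 ∧ (U : Set K) = a • (E : Set K)) ∧ k ∣ n) :=
  stmt_6_general F K q n k hq hn hk2 U hk
end

section
/- Let U be a k-dimensional F_q-subspace of F_{q^n} with 2 ≤ k ≤ n/2, and let f = |{uv^{-1}F_q^* : u,v ∈ U∖0}| denote the number of fractions of U. Then f ≤ Q + 1 where Q = ((q^k−1)/(q−1))·((q^k−q)/(q−1)), and equality holds if and only if Stab(U) = F_q^* and dim(U ∩ αU) ≤ 1 for all α ∈ F_{q^n}^* with αU ≠ U (i.e., Orb(U) is an optimal full-length orbit code with distance 2k−2). -/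
/-!
A fraction is `F ∙ u v⁻¹` for a pair `(⟨u⟩, ⟨v⟩)` of projective points of `U`. Diagonal pairs all
give `F ∙ 1` and off-diagonal pairs never do, so `f ≤ Q + 1`, with equality iff the fraction map is
injective on the `Q` off-diagonal pairs. A collision `F ∙ u v⁻¹ = F ∙ u' v'⁻¹` puts the independent
vectors `u', v'` into `U ∩ αU` for `α = v' v⁻¹`; conversely two independent vectors `αu, αv` of
`U ∩ αU` give the colliding pairs `(αu, αv)` and `(u, v)`. Hence equality holds iff
`dim (U ∩ αU) ≤ 1` for every `α ∉ F`, which for `dim U ≥ 2` is the condition on `Stab(U)` and on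
the intersections `U ∩ αU`.
-/

open Module Submodule Projectivization
open scoped LinearAlgebra.Projectivization

section FinrankLeOne

variable {K V : Type*} [DivisionRing K] [AddCommGroup V] [Module K V]

theorem finrank_le_one_iff_forall_exists_smul_eq [Module.Finite K V] :
    finrank K V ≤ 1 ↔ ∀ x y : V, y ≠ 0 → ∃ c : K, c • y = x := by
  rw [finrank_le_one_iff]
  constructor
  · rintro ⟨v, hv⟩ x y hy
    obtain ⟨a, rfl⟩ := hv x
    obtain ⟨b, rfl⟩ := hv y
    have hb : b ≠ 0 := by rintro rfl; simp at hy
    exact ⟨a * b⁻¹, by rw [smul_smul, mul_assoc, inv_mul_cancel₀ hb, mul_one]⟩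
  · intro h
    rcases subsingleton_or_nontrivial V with _ | _
    · exact ⟨0, fun w => ⟨0, Subsingleton.elim _ _⟩⟩
    · obtain ⟨y, hy⟩ := exists_ne (0 : V)
      exact ⟨y, fun x => h x y hy⟩

theorem Submodule.finrank_le_one_iff_forall_exists_smul_eq (W : Submodule K V)
    [Module.Finite K W] :
    finrank K W ≤ 1 ↔ ∀ x ∈ W, ∀ y ∈ W, y ≠ 0 → ∃ c : K, c • y = x := by
  simp only [_root_.finrank_le_one_iff_forall_exists_smul_eq, Subtype.forall, ne_eq,
    Subtype.ext_iff, coe_smul, ZeroMemClass.coe_zero]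

end FinrankLeOne

theorem Set.ncard_offDiag_univ {α : Type*} [Finite α] :
    (Set.univ : Set α).offDiag.ncard = Nat.card α * (Nat.card α - 1) := by
  classical
  have := Fintype.ofFinite α
  rw [← Finset.coe_univ, ← Finset.coe_offDiag, Set.ncard_coe_finset, Finset.offDiag_card,
    Finset.card_univ, Nat.card_eq_fintype_card, Nat.mul_sub_one]

theorem Projectivization.div_mul_div_eq_card_mul_card_sub_one {F V : Type*} [Field F]
    [AddCommGroup V] [Module F V] [Finite F] [Module.Finite F V] {q k : ℕ}
    (hq : Nat.card F = q) (hk : finrank F V = k) :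
    (q ^ k - 1) / (q - 1) * ((q ^ k - q) / (q - 1)) =
      Nat.card (ℙ F V) * (Nat.card (ℙ F V) - 1) := by
  have hcard : q ^ k - 1 = Nat.card (ℙ F V) * (q - 1) := by
    rw [← hq, ← hk, ← Module.natCard_eq_pow_finrank, Projectivization.card F V]
  have hq1 : 0 < q - 1 := by have := hq ▸ Finite.one_lt_card (α := F); omega
  have hsub : q ^ k - q = (Nat.card (ℙ F V) - 1) * (q - 1) := by
    rw [Nat.sub_one_mul, ← hcard]; omega
  rw [hcard, hsub, Nat.mul_div_cancel _ hq1, Nat.mul_div_cancel _ hq1]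

section Fractions

variable {F K : Type*} [Field F] [Field K] [Algebra F K]

theorem smul_mul_inv_eq_mul_inv_iff {u v u' v' : K} (hv : v ≠ 0) (hv' : v' ≠ 0) (c : F) :
    c • (u * v⁻¹) = u' * v'⁻¹ ↔ u' = v' * v⁻¹ * (c • u) := by
  rw [Algebra.smul_def, Algebra.smul_def, eq_comm, mul_inv_eq_iff_eq_mul₀ hv']
  constructor <;> rintro rfl <;> field_simp

theorem map_mulLeft_algebraMap (U : Submodule F K) {c : F} (hc : c ≠ 0) :
    U.map (LinearMap.mulLeft F (algebraMap F K c)) = U := by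
  have : LinearMap.mulLeft F (algebraMap F K c) = c • LinearMap.id := by
    ext x
    simp [Algebra.smul_def]
  rw [this, Submodule.map_smul _ _ _ hc, Submodule.map_id]

variable {U : Submodule F K}

theorem stabilizer_eq_and_finrank_inf_le_one_iff (hU : 2 ≤ finrank F U) :
    ({α : K | α ≠ 0 ∧ U.map (LinearMap.mulLeft F α) = U} =
        {α : K | ∃ c : F, c ≠ 0 ∧ α = algebraMap F K c} ∧
      ∀ α : K, α ≠ 0 → U.map (LinearMap.mulLeft F α) ≠ U →
        finrank F ↥(U ⊓ U.map (LinearMap.mulLeft F α)) ≤ 1) ↔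
    ∀ α ∉ Set.range (algebraMap F K), finrank F ↥(U ⊓ U.map (LinearMap.mulLeft F α)) ≤ 1 := by
  constructor
  · rintro ⟨hstab, hdim⟩ α hα
    have hα0 : α ≠ 0 := by rintro rfl; exact hα ⟨0, map_zero _⟩
    refine hdim α hα0 fun hmap => ?_
    obtain ⟨c, -, rfl⟩ : α ∈ {α : K | ∃ c : F, c ≠ 0 ∧ α = algebraMap F K c} :=
      hstab ▸ ⟨hα0, hmap⟩
    exact hα ⟨c, rfl⟩
  · intro h
    refine ⟨Set.ext fun α => ⟨fun ⟨hα0, hmap⟩ => ?_, ?_⟩, fun α hα0 hmap => h α ?_⟩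
    · by_cases hα : α ∈ Set.range (algebraMap F K)
      · obtain ⟨c, rfl⟩ := hα
        exact ⟨c, by rintro rfl; simp at hα0, rfl⟩
      · have := h α hα
        rw [hmap, inf_idem] at this
        omega
    · rintro ⟨c, hc, rfl⟩
      exact ⟨by simpa using hc, map_mulLeft_algebraMap U hc⟩
    · rintro ⟨c, rfl⟩
      exact hmap (map_mulLeft_algebraMap U (by rintro rfl; simp at hα0))

theorem mk_eq_mk_iff_exists_smul_eq {u v : U} (hu : u ≠ 0) (hv : v ≠ 0) :
    mk F u hu = mk F v hv ↔ ∃ a : F, a • (v : K) = u := by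
  simp only [mk_eq_mk_iff', Subtype.ext_iff, coe_smul]

variable (U) in
noncomputable def fractionMap (p : ℙ F U × ℙ F U) : Submodule F K :=
  F ∙ ((p.1.rep : K) * (p.2.rep : K)⁻¹)

theorem fractionMap_mk {u v : U} (hu : u ≠ 0) (hv : v ≠ 0) :
    fractionMap U (mk F u hu, mk F v hv) = F ∙ ((u : K) * (v : K)⁻¹) := by
  obtain ⟨a, ha⟩ := exists_smul_eq_mk_rep F u hu
  obtain ⟨b, hb⟩ := exists_smul_eq_mk_rep F v hv
  rw [fractionMap, ← ha, ← hb, eq_comm, span_singleton_eq_span_singleton]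
  refine ⟨a * b⁻¹, ?_⟩
  simp only [Units.smul_def, coe_smul, Algebra.smul_def, Units.val_mul, map_mul, mul_inv,
    map_units_inv]
  ring

theorem fractionMap_self (p : ℙ F U) : fractionMap U (p, p) = F ∙ 1 := by
  rw [fractionMap, mul_inv_cancel₀ (by simpa using p.rep_nonzero)]

theorem fractionMap_ne_span_one {p : ℙ F U × ℙ F U} (hp : p.1 ≠ p.2) :
    fractionMap U p ≠ F ∙ 1 := by
  obtain ⟨p₁, p₂⟩ := p
  induction p₁ with | h u hu => ?_
  induction p₂ with | h v hv => ?_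
  rw [fractionMap_mk, Ne, span_singleton_eq_span_singleton]
  rintro ⟨c, hc⟩
  have hv' : (v : K) ≠ 0 := by simpa using hv
  refine hp ((mk_eq_mk_iff F v u hv hu).2 ⟨c, Subtype.ext ?_⟩).symm
  rwa [Units.smul_def, Algebra.smul_def, ← mul_assoc, mul_inv_eq_one₀ hv', ← Algebra.smul_def,
    ← Units.smul_def] at hc

variable (U)

theorem range_fractionMap : Set.range (fractionMap U) =
    {W | ∃ u v : K, u ∈ U ∧ v ∈ U ∧ u ≠ 0 ∧ v ≠ 0 ∧ W = F ∙ (u * v⁻¹)} := by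
  ext W
  constructor
  · rintro ⟨⟨p₁, p₂⟩, rfl⟩
    induction p₁ with | h u hu => ?_
    induction p₂ with | h v hv => ?_
    exact ⟨u, v, u.2, v.2, by simpa using hu, by simpa using hv, fractionMap_mk hu hv⟩
  · rintro ⟨u, v, hu, hv, hu0, hv0, rfl⟩
    exact ⟨(mk F ⟨u, hu⟩ (by simpa using hu0), mk F ⟨v, hv⟩ (by simpa using hv0)),
      fractionMap_mk _ _⟩

theorem range_fractionMap_eq_insert [Nontrivial U] : Set.range (fractionMap U) =
    insert (F ∙ 1) (fractionMap U '' Set.univ.offDiag) := by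
  ext W
  constructor
  · rintro ⟨p, rfl⟩
    by_cases hp : p.1 = p.2
    · left
      rw [← Prod.mk.eta (p := p), hp, fractionMap_self]
    · exact Or.inr ⟨p, ⟨trivial, trivial, hp⟩, rfl⟩
  · rintro (rfl | ⟨p, -, rfl⟩)
    · obtain ⟨x⟩ := (inferInstance : Nonempty (ℙ F U))
      exact ⟨(x, x), fractionMap_self x⟩
    · exact ⟨p, rfl⟩

theorem ncard_range_fractionMap [Finite K] [Nontrivial U] :
    (Set.range (fractionMap U)).ncard = (fractionMap U '' Set.univ.offDiag).ncard + 1 := by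
  rw [range_fractionMap_eq_insert, Set.ncard_insert_of_notMem]
  rintro ⟨p, hp, h⟩
  exact fractionMap_ne_span_one (Set.mem_offDiag.1 hp).2.2 h

theorem natCard_fractions [Finite K] [Nontrivial U] :
    Nat.card {W : Submodule F K // ∃ u v : K, u ∈ U ∧ v ∈ U ∧ u ≠ 0 ∧ v ≠ 0 ∧ W = F ∙ (u * v⁻¹)} =
      (fractionMap U '' Set.univ.offDiag).ncard + 1 := by
  rw [← ncard_range_fractionMap, range_fractionMap]
  exact Nat.card_coe_set_eq _

variable {U} [FiniteDimensional F K]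

theorem finrank_inf_map_mulLeft_le_one_of_injOn
    (hinj : Set.InjOn (fractionMap U) Set.univ.offDiag) {α : K}
    (hα : α ∉ Set.range (algebraMap F K)) :
    finrank F ↥(U ⊓ U.map (LinearMap.mulLeft F α)) ≤ 1 := by
  rw [Submodule.finrank_le_one_iff_forall_exists_smul_eq]
  by_contra! h
  obtain ⟨_, ⟨hαu, u, hu, rfl⟩, _, ⟨hαv, v, hv, rfl⟩, hαv0, hindep⟩ := h
  simp only [LinearMap.mulLeft_apply] at hαu hαv hαv0 hindep
  have hα0 : α ≠ 0 := by rintro rfl; exact hα ⟨0, map_zero _⟩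
  have hαu0 : α * u ≠ 0 := fun h => hindep 0 (by rw [h, zero_smul])
  have hu0 : (⟨u, hu⟩ : U) ≠ 0 := by simpa using right_ne_zero_of_mul hαu0
  have hv0 : (⟨v, hv⟩ : U) ≠ 0 := by simpa using right_ne_zero_of_mul hαv0
  have hαu0' : (⟨α * u, hαu⟩ : U) ≠ 0 := by simpa only [ne_eq, mk_eq_zero] using hαu0
  have hαv0' : (⟨α * v, hαv⟩ : U) ≠ 0 := by simpa only [ne_eq, mk_eq_zero] using hαv0
  have hoff : (mk F _ hαu0', mk F _ hαv0') ∈ Set.univ.offDiag := by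
    refine ⟨trivial, trivial, fun h => ?_⟩
    obtain ⟨a, ha⟩ := (mk_eq_mk_iff_exists_smul_eq _ _).1 h
    exact hindep a ha
  have hoff' : (mk F _ hu0, mk F _ hv0) ∈ Set.univ.offDiag := by
    refine ⟨trivial, trivial, fun h => ?_⟩
    obtain ⟨a, ha⟩ := (mk_eq_mk_iff_exists_smul_eq _ _).1 h
    exact hindep a (by rw [← mul_smul_comm]; exact congrArg (α * ·) ha)
  have hpair := hinj hoff hoff' (by
    rw [fractionMap_mk, fractionMap_mk, mul_inv, mul_mul_mul_comm, mul_inv_cancel₀ hα0, one_mul])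
  obtain ⟨a, ha⟩ := (mk_eq_mk_iff_exists_smul_eq _ _).1 (congrArg Prod.fst hpair)
  exact hα ⟨a, mul_right_cancel₀ (by simpa using hu0) (by rw [← Algebra.smul_def]; exact ha)⟩

theorem injOn_fractionMap_offDiag
    (h : ∀ α ∉ Set.range (algebraMap F K), finrank F ↥(U ⊓ U.map (LinearMap.mulLeft F α)) ≤ 1) :
    Set.InjOn (fractionMap U) Set.univ.offDiag := by
  rintro ⟨p₁, p₂⟩ - ⟨p₁', p₂'⟩ hp' heq
  induction p₁ with | h u hu => ?_
  induction p₂ with | h v hv => ?_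
  induction p₁' with | h u' hu' => ?_
  induction p₂' with | h v' hv' => ?_
  have hv0 : (v : K) ≠ 0 := by simpa using hv
  have hv0' : (v' : K) ≠ 0 := by simpa using hv'
  rw [fractionMap_mk, fractionMap_mk, span_singleton_eq_span_singleton] at heq
  obtain ⟨c, hc⟩ := heq
  rw [Units.smul_def, smul_mul_inv_eq_mul_inv_iff hv0 hv0'] at hc
  set α := (v' : K) * (v : K)⁻¹
  have hv'α : (v' : K) = α * v := by rw [inv_mul_cancel_right₀ hv0]
  obtain ⟨a, ha⟩ : α ∈ Set.range (algebraMap F K) := by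
    by_contra hα
    obtain ⟨d, hd⟩ := (Submodule.finrank_le_one_iff_forall_exists_smul_eq _).1 (h α hα)
      u' ⟨u'.2, _, smul_mem _ _ u.2, hc.symm⟩ v' ⟨v'.2, v, v.2, hv'α.symm⟩ hv0'
    exact hp'.2.2 ((mk_eq_mk_iff_exists_smul_eq _ _).2 ⟨d, hd⟩)
  rw [← ha, ← Algebra.smul_def, smul_smul] at hc
  rw [← ha, ← Algebra.smul_def] at hv'α
  ext
  · exact ((mk_eq_mk_iff_exists_smul_eq _ _).2 ⟨a * c, hc.symm⟩).symm
  · exact ((mk_eq_mk_iff_exists_smul_eq _ _).2 ⟨a, hv'α.symm⟩).symm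

theorem injOn_fractionMap_offDiag_iff :
    Set.InjOn (fractionMap U) Set.univ.offDiag ↔
      ∀ α ∉ Set.range (algebraMap F K), finrank F ↥(U ⊓ U.map (LinearMap.mulLeft F α)) ≤ 1 :=
  ⟨fun hinj _ hα => finrank_inf_map_mulLeft_le_one_of_injOn hinj hα, injOn_fractionMap_offDiag⟩

end Fractions

theorem stmt_7_general (F K : Type) [Field F] [Field K] [Algebra F K]
    [Fintype F] [Fintype K] (q k : ℕ)
    (hq : Fintype.card F = q)
    (hk2 : 2 ≤ k)
    (U : Submodule F K) (hk : Module.finrank F U = k) :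
    Nat.card {W : Submodule F K //
        ∃ u v : K, u ∈ U ∧ v ∈ U ∧ u ≠ 0 ∧ v ≠ 0 ∧
          W = Submodule.span F {u * v⁻¹}}
      ≤ (q ^ k - 1) / (q - 1) * ((q ^ k - q) / (q - 1)) + 1 ∧
    (Nat.card {W : Submodule F K //
        ∃ u v : K, u ∈ U ∧ v ∈ U ∧ u ≠ 0 ∧ v ≠ 0 ∧
          W = Submodule.span F {u * v⁻¹}}
        = (q ^ k - 1) / (q - 1) * ((q ^ k - q) / (q - 1)) + 1 ↔
      ({α : K | α ≠ 0 ∧ Submodule.map (LinearMap.mulLeft F α) U = U}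
          = {α : K | ∃ c : F, c ≠ 0 ∧ α = algebraMap F K c} ∧
        ∀ α : K, α ≠ 0 → Submodule.map (LinearMap.mulLeft F α) U ≠ U →
          Module.finrank F ↥(U ⊓ Submodule.map (LinearMap.mulLeft F α) U) ≤ 1)) := by
  have hU : 2 ≤ finrank F U := hk ▸ hk2
  have : Nontrivial U := Module.nontrivial_of_finrank_pos (by omega : 0 < finrank F U)
  rw [natCard_fractions, Projectivization.div_mul_div_eq_card_mul_card_sub_one
    (Nat.card_eq_fintype_card.trans hq) hk, ← Set.ncard_offDiag_univ, Nat.add_right_cancel_iff,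
    Set.ncard_image_iff, injOn_fractionMap_offDiag_iff,
    stabilizer_eq_and_finrank_inf_le_one_iff hU]
  exact ⟨Nat.add_le_add_right Set.ncard_image_le 1, Iff.rfl⟩

/-- The number of fractions satisfies `f ≤ Q + 1` where
`Q = ((q^k-1)/(q-1))·((q^k-q)/(q-1))`, with equality iff `Orb(U)` is an optimal
full-length orbit code, i.e. `Stab(U) = F_q^*` and `dim(U ∩ αU) ≤ 1` whenever `αU ≠ U`. -/
theorem stmt_7 (F K : Type) [Field F] [Field K] [Algebra F K]
    [Fintype F] [Fintype K] (q n k : ℕ)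
    (hq : Fintype.card F = q) (hn : Module.finrank F K = n)
    (hk2 : 2 ≤ k) (hkn : 2 * k ≤ n)
    (U : Submodule F K) (hk : Module.finrank F U = k) :
    Nat.card {W : Submodule F K //
        ∃ u v : K, u ∈ U ∧ v ∈ U ∧ u ≠ 0 ∧ v ≠ 0 ∧
          W = Submodule.span F {u * v⁻¹}}
      ≤ (q ^ k - 1) / (q - 1) * ((q ^ k - q) / (q - 1)) + 1 ∧
    (Nat.card {W : Submodule F K //
        ∃ u v : K, u ∈ U ∧ v ∈ U ∧ u ≠ 0 ∧ v ≠ 0 ∧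
          W = Submodule.span F {u * v⁻¹}}
        = (q ^ k - 1) / (q - 1) * ((q ^ k - q) / (q - 1)) + 1 ↔
      ({α : K | α ≠ 0 ∧ Submodule.map (LinearMap.mulLeft F α) U = U}
          = {α : K | ∃ c : F, c ≠ 0 ∧ α = algebraMap F K c} ∧
        ∀ α : K, α ≠ 0 → Submodule.map (LinearMap.mulLeft F α) U ≠ U →
          Module.finrank F ↥(U ⊓ Submodule.map (LinearMap.mulLeft F α) U) ≤ 1)) :=
  stmt_7_general F K q k hq hk2 U hk
end

section
/- All k-dimensional Sidon spaces U in F_{q^n} (with 2 ≤ k ≤ n/2) have the same number of fractions, namely |{uv^{-1}F_q^* : u,v ∈ U∖0}| = ((q^k−1)/(q−1))·((q^k−q)/(q−1)) + 1. -/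
open Module LinearAlgebra.Projectivization

private lemma aux_card_proj (F V : Type*) [Field F] [Fintype F] [AddCommGroup V]
    [Module F V] [Finite V] :
    Nat.card (ℙ F V) * (Fintype.card F - 1) = Nat.card V - 1 := by
  classical
  haveI : Fintype V := Fintype.ofFinite V
  have e : (ℙ F V) × Fˣ ≃ {v : V // v ≠ 0} := by
    refine Equiv.ofBijective
      (fun p => ⟨(p.2 : F) • p.1.rep,
        smul_ne_zero (Units.ne_zero p.2) p.1.rep_nonzero⟩) ⟨?_, ?_⟩
    · rintro ⟨L, c⟩ ⟨L', c'⟩ h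
      simp only [Subtype.mk.injEq] at h
      have hL : L = L' := by
        have h1 : Projectivization.mk F L.rep L.rep_nonzero
            = Projectivization.mk F L'.rep L'.rep_nonzero := by
          rw [Projectivization.mk_eq_mk_iff]
          refine ⟨c⁻¹ * c', ?_⟩
          have : ((c⁻¹ * c' : Fˣ) : F) • L'.rep = (c⁻¹ : Fˣ) • ((c' : F) • L'.rep) := by
            simp [mul_smul, Units.smul_def]
          rw [Units.smul_def, this, ← h, Units.smul_def, ← mul_smul]
          simp
        rwa [Projectivization.mk_rep, Projectivization.mk_rep] at h1
      subst hL
      have hc : (c : F) = (c' : F) := by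
        have h2 : ((c : F) - (c' : F)) • L.rep = 0 := by
          rw [sub_smul, h, sub_self]
        rcases smul_eq_zero.1 h2 with h3 | h3
        · exact sub_eq_zero.1 h3
        · exact absurd h3 L.rep_nonzero
      simp [Prod.ext_iff, Units.ext_iff, hc]
    · rintro ⟨v, hv⟩
      have h1 : Projectivization.mk F (Projectivization.mk F v hv).rep
          (Projectivization.mk F v hv).rep_nonzero = Projectivization.mk F v hv :=
        Projectivization.mk_rep _
      obtain ⟨a, ha⟩ := (Projectivization.mk_eq_mk_iff F _ _ _ _).1 h1
      refine ⟨⟨Projectivization.mk F v hv, a⁻¹⟩, ?_⟩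
      apply Subtype.ext
      simp only
      rw [show ((a⁻¹ : Fˣ) : F) • (Projectivization.mk F v hv).rep
          = (a⁻¹ : Fˣ) • (Projectivization.mk F v hv).rep from rfl, ← ha]
      simp [Units.smul_def, ← mul_smul]
  have h2 : Nat.card ((ℙ F V) × Fˣ) = Nat.card {v : V // v ≠ 0} := Nat.card_congr e
  rw [Nat.card_prod] at h2
  have h3 : Nat.card Fˣ = Fintype.card F - 1 := by
    rw [Nat.card_eq_fintype_card, Fintype.card_units]
  have h4 : Nat.card {v : V // v ≠ 0} = Nat.card V - 1 := by
    rw [Nat.card_eq_fintype_card, Nat.card_eq_fintype_card,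
      Fintype.card_subtype_compl (fun v : V => v = 0), Fintype.card_subtype_eq]
  rw [h3, h4] at h2
  exact h2

private lemma aux_card_offdiag (A : Type*) [Finite A] :
    Nat.card {p : A × A // p.1 ≠ p.2} = Nat.card A * Nat.card A - Nat.card A := by
  classical
  haveI : Fintype A := Fintype.ofFinite A
  have h1 : Fintype.card {p : A × A // p.1 = p.2} = Fintype.card A := by
    refine Fintype.card_congr ⟨fun p => p.1.1, fun a => ⟨(a, a), rfl⟩, ?_, fun a => rfl⟩
    rintro ⟨⟨a, b⟩, h⟩
    simp only at h
    subst h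
    rfl
  rw [Nat.card_eq_fintype_card, Nat.card_eq_fintype_card,
    Fintype.card_subtype_compl (fun p : A × A => p.1 = p.2), Fintype.card_prod, h1]

/-- All `k`-dimensional Sidon spaces in `F_{q^n}` have the same number of
fractions, namely `((q^k-1)/(q-1))·((q^k-q)/(q-1)) + 1`. -/
theorem stmt_9 (F K : Type) [Field F] [Field K] [Algebra F K]
    [Fintype F] [Fintype K] (q n k : ℕ)
    (hq : Fintype.card F = q) (hn : Module.finrank F K = n)
    (hk2 : 2 ≤ k) (hkn : 2 * k ≤ n)
    (U : Submodule F K) (hk : Module.finrank F U = k)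
    (hSidon : ∀ a b c d : K, a ∈ U → b ∈ U → c ∈ U → d ∈ U →
      a ≠ 0 → b ≠ 0 → c ≠ 0 → d ≠ 0 → a * b = c * d →
      ((∃ μ : F, μ ≠ 0 ∧ a = μ • c) ∧ (∃ ν : F, ν ≠ 0 ∧ b = ν • d)) ∨
      ((∃ μ : F, μ ≠ 0 ∧ a = μ • d) ∧ (∃ ν : F, ν ≠ 0 ∧ b = ν • c))) :
    Nat.card {W : Submodule F K //
        ∃ u v : K, u ∈ U ∧ v ∈ U ∧ u ≠ 0 ∧ v ≠ 0 ∧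
          W = Submodule.span F {u * v⁻¹}}
      = (q ^ k - 1) / (q - 1) * ((q ^ k - q) / (q - 1)) + 1 := by
  classical
  subst hq
  have hq2 : 2 ≤ Fintype.card F := Fintype.one_lt_card
  -- nonzero coercion helper
  have cne : ∀ x : ↥U, x ≠ 0 → (x : K) ≠ 0 := fun x hx h => hx (Subtype.ext h)
  have cne' : ∀ x : ↥U, (x : K) ≠ 0 → x ≠ 0 := fun x hx h => hx (by rw [h]; rfl)
  -- U is nontrivial
  haveI hUnt : Nontrivial ↥U := Module.nontrivial_of_finrank_pos (R := F) (by omega)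
  obtain ⟨u₀, hu₀⟩ := exists_ne (0 : ↥U)
  have hu₀K : (u₀ : K) ≠ 0 := cne u₀ hu₀
  -- mk equality from scalar relation
  have mkeq : ∀ (x y : ↥U) (hx : x ≠ 0) (hy : y ≠ 0) (t : F), (x : K) = t • (y : K) →
      Projectivization.mk F x hx = Projectivization.mk F y hy := by
    intro x y hx hy t hxy
    rw [Projectivization.mk_eq_mk_iff']
    refine ⟨t, Subtype.ext ?_⟩
    simp [← hxy]
  -- key injectivity lemma from the Sidon property
  have key : ∀ (a b c d : ↥U) (ha : a ≠ 0) (hb : b ≠ 0) (hc : c ≠ 0) (hd : d ≠ 0),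
      Submodule.span F {(a : K) * (b : K)⁻¹} = Submodule.span F {(c : K) * (d : K)⁻¹} →
      Projectivization.mk F a ha ≠ Projectivization.mk F b hb →
      Projectivization.mk F a ha = Projectivization.mk F c hc ∧
      Projectivization.mk F b hb = Projectivization.mk F d hd := by
    intro a b c d ha hb hc hd hspan hab
    have ha0 := cne a ha; have hb0 := cne b hb; have hc0 := cne c hc; have hd0 := cne d hd
    have hx : (a : K) * (b : K)⁻¹ ∈ Submodule.span F {(c : K) * (d : K)⁻¹} := by
      rw [← hspan]; exact Submodule.mem_span_singleton_self _
    obtain ⟨μ, hμ⟩ := Submodule.mem_span_singleton.1 hx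
    have hμ0 : μ ≠ 0 := by
      rintro rfl
      rw [zero_smul] at hμ
      exact mul_ne_zero ha0 (inv_ne_zero hb0) hμ.symm
    have hμ' : algebraMap F K μ * ((c : K) * (d : K)⁻¹) = (a : K) * (b : K)⁻¹ := by
      rw [← Algebra.smul_def]; exact hμ
    have goal' : (a : K) * (d : K) = (μ • (c : K)) * (b : K) := by
      rw [Algebra.smul_def]
      field_simp at hμ'
      linear_combination -hμ'
    have hμc : μ • (c : K) ≠ 0 := smul_ne_zero hμ0 hc0
    rcases hSidon (a : K) (d : K) (μ • (c : K)) (b : K) a.2 d.2 (U.smul_mem μ c.2) b.2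
        ha0 hd0 hμc hb0 goal' with ⟨⟨μ₁, hμ₁0, hμ₁⟩, ⟨ν, hν0, hν⟩⟩ | ⟨⟨μ₁, hμ₁0, hμ₁⟩, -⟩
    · constructor
      · refine mkeq a c ha hc (μ₁ * μ) ?_
        rw [mul_smul]; exact hμ₁
      · refine (mkeq d b hd hb ν hν).symm
    · exact absurd (mkeq a b ha hb μ₁ hμ₁) hab
  -- the bijection
  set S := {W : Submodule F K //
      ∃ u v : K, u ∈ U ∧ v ∈ U ∧ u ≠ 0 ∧ v ≠ 0 ∧
        W = Submodule.span F {u * v⁻¹}} with hS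
  set T := Option {p : (ℙ F ↥U) × (ℙ F ↥U) // p.1 ≠ p.2} with hT
  have repne : ∀ L : ℙ F ↥U, (L.rep : K) ≠ 0 := fun L => cne L.rep L.rep_nonzero
  have hspan1 : Submodule.span F {(u₀ : K) * (u₀ : K)⁻¹} = Submodule.span F {(1 : K)} := by
    rw [mul_inv_cancel₀ hu₀K]
  let f : T → S := fun o =>
    match o with
    | none => ⟨Submodule.span F {(1 : K)}, (u₀ : K), (u₀ : K), u₀.2, u₀.2, hu₀K, hu₀K,
        hspan1.symm⟩
    | some p => ⟨Submodule.span F {(p.1.1.rep : K) * (p.1.2.rep : K)⁻¹},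
        (p.1.1.rep : K), (p.1.2.rep : K), p.1.1.rep.2, p.1.2.rep.2,
        repne p.1.1, repne p.1.2, rfl⟩
  have hmkrep : ∀ L : ℙ F ↥U, Projectivization.mk F L.rep L.rep_nonzero = L :=
    fun L => Projectivization.mk_rep L
  have hinj : Function.Injective f := by
    rintro (_ | ⟨⟨L₁, L₂⟩, hL⟩) (_ | ⟨⟨M₁, M₂⟩, hM⟩) h
    · rfl
    · exfalso
      have hsp : Submodule.span F {(M₁.rep : K) * (M₂.rep : K)⁻¹}
          = Submodule.span F {(u₀ : K) * (u₀ : K)⁻¹} := by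
        rw [hspan1]
        exact (congrArg Subtype.val h).symm
      obtain ⟨h1, h2⟩ := key M₁.rep M₂.rep u₀ u₀ M₁.rep_nonzero M₂.rep_nonzero hu₀ hu₀ hsp
        (by rw [hmkrep, hmkrep]; exact hM)
      exact hM (by rw [← hmkrep M₁, ← hmkrep M₂, h1, h2])
    · exfalso
      have hsp : Submodule.span F {(L₁.rep : K) * (L₂.rep : K)⁻¹}
          = Submodule.span F {(u₀ : K) * (u₀ : K)⁻¹} := by
        rw [hspan1]
        exact congrArg Subtype.val h
      obtain ⟨h1, h2⟩ := key L₁.rep L₂.rep u₀ u₀ L₁.rep_nonzero L₂.rep_nonzero hu₀ hu₀ hsp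
        (by rw [hmkrep, hmkrep]; exact hL)
      exact hL (by rw [← hmkrep L₁, ← hmkrep L₂, h1, h2])
    · have hsp : Submodule.span F {(L₁.rep : K) * (L₂.rep : K)⁻¹}
          = Submodule.span F {(M₁.rep : K) * (M₂.rep : K)⁻¹} :=
        congrArg Subtype.val h
      obtain ⟨h1, h2⟩ := key L₁.rep L₂.rep M₁.rep M₂.rep L₁.rep_nonzero L₂.rep_nonzero
        M₁.rep_nonzero M₂.rep_nonzero hsp (by rw [hmkrep, hmkrep]; exact hL)
      rw [hmkrep, hmkrep] at h1 h2
      congr 1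
      exact Subtype.ext (Prod.ext h1 h2)
  have hsurj : Function.Surjective f := by
    rintro ⟨W, u, v, huU, hvU, hu0, hv0, rfl⟩
    set ub : ↥U := ⟨u, huU⟩
    set vb : ↥U := ⟨v, hvU⟩
    have hub : ub ≠ 0 := cne' ub hu0
    have hvb : vb ≠ 0 := cne' vb hv0
    by_cases hmk : Projectivization.mk F ub hub = Projectivization.mk F vb hvb
    · refine ⟨none, ?_⟩
      apply Subtype.ext
      obtain ⟨t, ht⟩ := (Projectivization.mk_eq_mk_iff' F _ _ _ _).1 hmk
      have htK : u = t • v := by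
        have := congrArg (Subtype.val : ↥U → K) ht
        simpa using this.symm
      have ht0 : t ≠ 0 := by rintro rfl; rw [zero_smul] at htK; exact hu0 htK
      show Submodule.span F {(1 : K)} = Submodule.span F {u * v⁻¹}
      have : u * v⁻¹ = t • (1 : K) := by
        rw [htK, smul_mul_assoc, mul_inv_cancel₀ hv0]
      rw [this, Submodule.span_singleton_smul_eq (IsUnit.mk0 t ht0) _]
    · refine ⟨some ⟨(Projectivization.mk F ub hub, Projectivization.mk F vb hvb), hmk⟩, ?_⟩
      apply Subtype.ext
      obtain ⟨s, hs⟩ := (Projectivization.mk_eq_mk_iff' F _ _ _ _).1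
        (hmkrep (Projectivization.mk F ub hub))
      obtain ⟨t, ht⟩ := (Projectivization.mk_eq_mk_iff' F _ _ _ _).1
        (hmkrep (Projectivization.mk F vb hvb))
      have hsK : ((Projectivization.mk F ub hub).rep : K) = s • u := by
        have := congrArg (Subtype.val : ↥U → K) hs
        simpa using this.symm
      have htK : ((Projectivization.mk F vb hvb).rep : K) = t • v := by
        have := congrArg (Subtype.val : ↥U → K) ht
        simpa using this.symm
      have hs0 : s ≠ 0 := by
        rintro rfl; rw [zero_smul] at hsK
        exact repne _ hsK
      have ht0 : t ≠ 0 := by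
        rintro rfl; rw [zero_smul] at htK
        exact repne _ htK
      show Submodule.span F {((Projectivization.mk F ub hub).rep : K)
          * ((Projectivization.mk F vb hvb).rep : K)⁻¹} = Submodule.span F {u * v⁻¹}
      have hprod : ((Projectivization.mk F ub hub).rep : K)
          * ((Projectivization.mk F vb hvb).rep : K)⁻¹ = (s * t⁻¹) • (u * v⁻¹) := by
        rw [hsK, htK, Algebra.smul_def, Algebra.smul_def, Algebra.smul_def,
          map_mul, map_inv₀, mul_inv]
        field_simp
      rw [hprod, Submodule.span_singleton_smul_eq (IsUnit.mk0 _ (by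
        exact mul_ne_zero hs0 (inv_ne_zero ht0))) _]
  have hcard : Nat.card T = Nat.card S := Nat.card_eq_of_bijective f ⟨hinj, hsurj⟩
  -- counting
  haveI : Finite ↥U := Subtype.finite
  haveI : Finite (ℙ F ↥U) := Quotient.finite _
  set N := Nat.card (ℙ F ↥U) with hN
  have hcardT : Nat.card T = (N * N - N) + 1 := by
    rw [hT, Finite.card_option, aux_card_offdiag]
  have hcardU : Nat.card ↥U = Fintype.card F ^ k := by
    rw [Nat.card_eq_fintype_card, card_eq_pow_finrank (K := F) (V := ↥U), hk]
  have hNq : N * (Fintype.card F - 1) = Fintype.card F ^ k - 1 := by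
    rw [hN, aux_card_proj, hcardU]
  have hpos : 0 < Fintype.card F - 1 := by omega
  have e1 : (Fintype.card F ^ k - 1) / (Fintype.card F - 1) = N := by
    rw [← hNq, Nat.mul_div_cancel _ hpos]
  have hqk : Fintype.card F ≤ Fintype.card F ^ k :=
    Nat.le_self_pow (by omega) _
  have e2 : Fintype.card F ^ k - Fintype.card F = (N - 1) * (Fintype.card F - 1) := by
    rw [Nat.sub_mul, one_mul, hNq]
    omega
  have e3 : (Fintype.card F ^ k - Fintype.card F) / (Fintype.card F - 1) = N - 1 := by
    rw [e2, Nat.mul_div_cancel _ hpos]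
  rw [← hcard, hcardT, e1, e3, Nat.mul_sub_one]
end

section
/- The projective space P(F_{q^n}) minus the class of 1 is a disjoint union of (q^{n−1}−1)/(q−1) projectivized φ-orbits, where φ(α,λ) = α/(1+λα); i.e., the sets {φ(α,λ)F_q^* : λ ∈ F_q} for α ∈ F_{q^n}∖F_q partition P(F_{q^n})∖{F_q^*}, each having size q. -/
/-! Inversion conjugates `φ(·, λ)` to the translation `x ↦ x + λ`, so the projectivized orbit of
`α` consists of the lines `F ∙ z⁻¹` with `z` in the affine class `F^* α⁻¹ + F` of `α⁻¹`. Affine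
classes are stable under `F^*`-scaling, hence two orbits coincide or are disjoint as the affine
classes of `α⁻¹` and `β⁻¹` do. For `α ∉ F` the elements `1, α⁻¹` are `F`-independent, so the affine
class of `α⁻¹` has `(q - 1) q` elements and the orbit of `α` has `q`; counting `K ∖ F` fibrewise
gives `(q^n - q) / ((q - 1) q)` orbits. -/

/-- The projectivized orbit of `α` under `φ(α,λ) = α/(1+λα)`. -/
def projOrb (F K : Type) [Field F] [Field K] [Algebra F K] (α : K) :
    Set (Submodule F K) :=
  {W | ∃ l : F, W = Submodule.span F {α / (1 + l • α)}}

theorem Nat.card_eq_card_mul_of_card_fiber {A B : Type*} [Finite A] [Finite B] (f : A → B)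
    {k : ℕ} (h : ∀ b, Nat.card {a // f a = b} = k) : Nat.card A = Nat.card B * k := by
  cases nonempty_fintype B
  rw [← Nat.card_congr (Equiv.sigmaFiberEquiv f), Nat.card_sigma]
  simp [h]

theorem Nat.eq_pow_pred_sub_one_div_of_mul_eq {q n N : ℕ} (hq : 1 < q) (hn : 0 < n)
    (h : N * ((q - 1) * q) = q ^ n - q) : N = (q ^ (n - 1) - 1) / (q - 1) := by
  obtain ⟨m, rfl⟩ : ∃ m, n = m + 1 := ⟨n - 1, by omega⟩
  have hmul : q * (N * (q - 1)) = q * (q ^ m - 1) := by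
    rw [Nat.mul_sub_one q (q ^ m), ← pow_succ', ← h]
    ring
  rw [Nat.add_sub_cancel, ← Nat.eq_of_mul_eq_mul_left (by omega) hmul,
    Nat.mul_div_cancel _ (by omega)]

section

variable {F K : Type*} [Field F] [Field K] [Algebra F K] {x y : K}

theorem smul_add_algebraMap_injective (hx : x ∉ Set.range (algebraMap F K)) :
    Function.Injective fun p : F × F => p.1 • x + algebraMap F K p.2 := by
  rintro ⟨a, b⟩ ⟨a', b'⟩ h
  simp only [Algebra.smul_def] at h
  obtain rfl : a = a' := by
    by_contra hne
    have : algebraMap F K (a - a') ≠ 0 := by simpa [sub_eq_zero] using hne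
    refine hx ⟨(b' - b) / (a - a'), ?_⟩
    rw [map_div₀, div_eq_iff this, map_sub, map_sub]
    linear_combination -h
  simpa using h

theorem ne_zero_of_notMem_range (hx : x ∉ Set.range (algebraMap F K)) : x ≠ 0 := by
  rintro rfl
  exact hx ⟨0, map_zero _⟩

theorem inv_notMem_range (hx : x ∉ Set.range (algebraMap F K)) :
    x⁻¹ ∉ Set.range (algebraMap F K) := by
  rintro ⟨c, hc⟩
  exact hx ⟨c⁻¹, by rw [map_inv₀, hc, inv_inv]⟩

theorem inv_div_one_add_smul (hx : x ∉ Set.range (algebraMap F K)) (l : F) :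
    (x / (1 + l • x))⁻¹ = x⁻¹ + algebraMap F K l := by
  have hden : 1 + l • x ≠ 0 := fun h => by
    have := smul_add_algebraMap_injective hx (a₁ := (l, 1)) (a₂ := (0, 0))
      (by simpa [add_comm] using h)
    simp at this
  rw [Algebra.smul_def] at hden ⊢
  have := ne_zero_of_notMem_range hx
  field_simp

def affineClass (F : Type*) {K : Type*} [Field F] [Field K] [Algebra F K] (x : K) : Set K :=
  Set.range fun p : Fˣ × F => p.1 • x + algebraMap F K p.2

theorem mem_affineClass_self (x : K) : x ∈ affineClass F x :=
  ⟨(1, 0), by simp⟩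

theorem units_smul_mem_affineClass (c : Fˣ) (hy : y ∈ affineClass F x) :
    c • y ∈ affineClass F x := by
  obtain ⟨⟨u, v⟩, rfl⟩ := hy
  exact ⟨(c * u, c * v), by simp [smul_add, mul_smul, Units.smul_def, Algebra.smul_def]⟩

theorem affineClass_subset_of_mem (hy : y ∈ affineClass F x) :
    affineClass F y ⊆ affineClass F x := by
  obtain ⟨⟨u, v⟩, rfl⟩ := hy
  rintro _ ⟨⟨u', v'⟩, rfl⟩
  exact ⟨(u' * u, u' * v + v'), by
    simp [smul_add, mul_smul, Units.smul_def, Algebra.smul_def, add_assoc]⟩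

theorem mem_affineClass_symm (hy : y ∈ affineClass F x) : x ∈ affineClass F y := by
  obtain ⟨⟨u, v⟩, rfl⟩ := hy
  refine ⟨(u⁻¹, -(u⁻¹ * v)), ?_⟩
  simp only [Units.smul_def, Algebra.smul_def, Units.val_inv_eq_inv_val, map_inv₀, map_neg,
    map_mul]
  field_simp
  ring

theorem affineClass_eq_of_mem (hy : y ∈ affineClass F x) : affineClass F y = affineClass F x :=
  (affineClass_subset_of_mem hy).antisymm (affineClass_subset_of_mem (mem_affineClass_symm hy))

theorem notMem_range_of_mem_affineClass (hx : x ∉ Set.range (algebraMap F K))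
    (hy : y ∈ affineClass F x) : y ∉ Set.range (algebraMap F K) := by
  obtain ⟨⟨u, v⟩, rfl⟩ := mem_affineClass_symm hy
  rintro ⟨c, rfl⟩
  exact hx ⟨u * c + v, by simp [Units.smul_def, Algebra.smul_def]⟩

theorem card_affineClass [Finite F] (hx : x ∉ Set.range (algebraMap F K)) :
    Nat.card (affineClass F x) = (Nat.card F - 1) * Nat.card F := by
  have hinj : Function.Injective fun p : Fˣ × F => p.1 • x + algebraMap F K p.2 :=
    (smul_add_algebraMap_injective hx).comp (Prod.map_injective.mpr ⟨Units.val_injective,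
      Function.injective_id⟩)
  rw [affineClass, Nat.card_range_of_injective hinj, Nat.card_prod, Nat.card_units]

theorem span_inv_eq_span_inv_iff :
    (F ∙ x⁻¹) = (F ∙ y⁻¹) ↔ ∃ u : Fˣ, u • x = y := by
  rw [Submodule.span_singleton_eq_span_singleton]
  refine (Equiv.inv Fˣ).exists_congr fun u => ?_
  simp only [Units.smul_def, Algebra.smul_def, Equiv.inv_apply, Units.val_inv_eq_inv_val, map_inv₀]
  rw [← inv_inj, mul_inv, inv_inv, inv_inv]

theorem span_inv_mem_image_affineClass_iff :
    (F ∙ y⁻¹) ∈ (fun z => F ∙ z⁻¹) '' affineClass F x ↔ y ∈ affineClass F x := by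
  refine ⟨fun ⟨z, hz, h⟩ => ?_, fun hy => ⟨y, hy, rfl⟩⟩
  obtain ⟨u, rfl⟩ := span_inv_eq_span_inv_iff.mp h
  exact units_smul_mem_affineClass u hz

theorem span_singleton_eq_span_one_iff (hx : x ≠ 0) :
    (F ∙ x) = (F ∙ 1) ↔ x ∈ Set.range (algebraMap F K) := by
  rw [Submodule.span_singleton_eq_span_singleton]
  constructor
  · rintro ⟨u, hu⟩
    refine ⟨(u⁻¹ : Fˣ), ?_⟩
    rw [← inv_smul_eq_iff.mpr hu.symm, Units.smul_def, Algebra.smul_def, mul_one]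
  · rintro ⟨c, rfl⟩
    have hc : c ≠ 0 := by rintro rfl; exact hx (map_zero _)
    exact ⟨(Units.mk0 c hc)⁻¹, by simp [Units.smul_def, Algebra.smul_def, hc]⟩

end

section

variable {F K : Type} [Field F] [Field K] [Algebra F K] {α β : K}

theorem projOrb_eq_image (hα : α ∉ Set.range (algebraMap F K)) :
    projOrb F K α = (fun z => F ∙ z⁻¹) '' affineClass F α⁻¹ := by
  ext W
  constructor
  · rintro ⟨l, rfl⟩
    refine ⟨α⁻¹ + algebraMap F K l, ⟨(1, l), by simp⟩, ?_⟩
    dsimp only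
    rw [← inv_div_one_add_smul hα, inv_inv]
  · rintro ⟨_, ⟨⟨u, v⟩, rfl⟩, rfl⟩
    refine ⟨u⁻¹ * v, ?_⟩
    rw [← inv_inv (α / _), inv_div_one_add_smul hα]
    exact span_inv_eq_span_inv_iff.mpr ⟨u⁻¹, by simp [smul_add, Units.smul_def, Algebra.smul_def]⟩

theorem projOrb_eq_projOrb_iff (hα : α ∉ Set.range (algebraMap F K))
    (hβ : β ∉ Set.range (algebraMap F K)) :
    projOrb F K α = projOrb F K β ↔ β⁻¹ ∈ affineClass F α⁻¹ := by
  rw [projOrb_eq_image hα, projOrb_eq_image hβ]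
  refine ⟨fun h => ?_, fun h => by rw [affineClass_eq_of_mem h]⟩
  rw [← span_inv_mem_image_affineClass_iff, h]
  exact ⟨β⁻¹, mem_affineClass_self _, rfl⟩

theorem projOrb_eq_or_disjoint (hα : α ∉ Set.range (algebraMap F K))
    (hβ : β ∉ Set.range (algebraMap F K)) :
    projOrb F K α = projOrb F K β ∨ Disjoint (projOrb F K α) (projOrb F K β) := by
  refine or_iff_not_imp_right.mpr fun h => ?_
  obtain ⟨W, hWα, hWβ⟩ := Set.not_disjoint_iff.mp h
  rw [projOrb_eq_image hα] at hWα
  rw [projOrb_eq_image hβ] at hWβ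
  obtain ⟨z, hzα, rfl⟩ := hWα
  have hzβ := span_inv_mem_image_affineClass_iff.mp hWβ
  rw [projOrb_eq_projOrb_iff hα hβ, ← affineClass_eq_of_mem hzα, affineClass_eq_of_mem hzβ]
  exact mem_affineClass_self _

theorem biUnion_projOrb :
    ⋃ α ∈ {γ : K | γ ∉ Set.range (algebraMap F K)}, projOrb F K α
      = {W | ∃ γ : K, γ ≠ 0 ∧ W = F ∙ γ ∧ W ≠ F ∙ 1} := by
  ext W
  simp only [Set.mem_iUnion, Set.mem_ofPred_eq, exists_prop]
  constructor
  · rintro ⟨α, hα, hW⟩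
    rw [projOrb_eq_image hα] at hW
    obtain ⟨z, hz, rfl⟩ := hW
    have hz' := inv_notMem_range (notMem_range_of_mem_affineClass (inv_notMem_range hα) hz)
    have hz0 := ne_zero_of_notMem_range hz'
    exact ⟨z⁻¹, hz0, rfl, (span_singleton_eq_span_one_iff hz0).not.mpr hz'⟩
  · rintro ⟨γ, hγ, rfl, hne⟩
    exact ⟨γ, fun h => hne ((span_singleton_eq_span_one_iff hγ).mpr h), 0, by simp⟩

theorem card_projOrb (hα : α ∉ Set.range (algebraMap F K)) :
    Nat.card (projOrb F K α) = Nat.card F := by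
  have hinj : Function.Injective fun l : F => F ∙ (α / (1 + l • α)) := by
    intro l m h
    dsimp only at h
    rw [← inv_inv (α / (1 + l • α)), ← inv_inv (α / (1 + m • α)), inv_div_one_add_smul hα,
      inv_div_one_add_smul hα] at h
    obtain ⟨u, hu⟩ := span_inv_eq_span_inv_iff.mp h
    have := smul_add_algebraMap_injective (inv_notMem_range hα) (a₁ := ((u : F), u * l))
      (a₂ := (1, m)) (by simpa [smul_add, Units.smul_def, Algebra.smul_def] using hu)
    simp only [Prod.mk.injEq, Units.val_eq_one] at this
    simpa [this.1] using this.2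
  have hrange : projOrb F K α = Set.range fun l : F => F ∙ (α / (1 + l • α)) := by
    ext W
    simp [projOrb, eq_comm]
  rw [hrange, Nat.card_range_of_injective hinj]

/-- Inversion carries each fibre of `α ↦ projOrb F K α` on `K ∖ F` onto an affine class. -/
theorem card_projOrbs_mul [Finite F] [Finite K] :
    Nat.card {S // ∃ α : K, α ∉ Set.range (algebraMap F K) ∧ S = projOrb F K α}
        * ((Nat.card F - 1) * Nat.card F) = Nat.card K - Nat.card F := by
  let f : {β : K // β ∉ Set.range (algebraMap F K)} →
      {S // ∃ α : K, α ∉ Set.range (algebraMap F K) ∧ S = projOrb F K α} :=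
    fun β => ⟨projOrb F K β, β, β.2, rfl⟩
  have : Finite _ := Finite.of_surjective f fun ⟨_, α, hα, h⟩ => ⟨⟨α, hα⟩, Subtype.ext h.symm⟩
  have hfiber : ∀ t, Nat.card {β // f β = t} = (Nat.card F - 1) * Nat.card F := by
    rintro ⟨_, α, hα, rfl⟩
    rw [← card_affineClass (inv_notMem_range hα)]
    refine Nat.card_congr
      { toFun := fun β => ⟨β.1.1⁻¹,
          (projOrb_eq_projOrb_iff hα β.1.2).mp (congrArg Subtype.val β.2).symm⟩
        invFun := fun z =>
          have hz := inv_notMem_range (notMem_range_of_mem_affineClass (inv_notMem_range hα) z.2)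
          ⟨⟨z.1⁻¹, hz⟩, Subtype.ext ((projOrb_eq_projOrb_iff hα hz).mpr (by simp)).symm⟩
        left_inv := fun β => by simp
        right_inv := fun z => by simp }
  rw [← Nat.card_eq_card_mul_of_card_fiber f hfiber]
  change Nat.card ↥(Set.range (algebraMap F K))ᶜ = _
  rw [Nat.card_coe_set_eq, Set.ncard_compl, Set.ncard_range_of_injective (algebraMap F K).injective]

end

theorem stmt_13_general (F K : Type) [Field F] [Field K] [Algebra F K]
    [Fintype F] [Fintype K] (q n : ℕ)
    (hq : Fintype.card F = q) (hn : Module.finrank F K = n) :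
    (∀ α β : K, α ∉ Set.range (algebraMap F K) → β ∉ Set.range (algebraMap F K) →
      projOrb F K α = projOrb F K β ∨ Disjoint (projOrb F K α) (projOrb F K β)) ∧
    (⋃ α ∈ {γ : K | γ ∉ Set.range (algebraMap F K)}, projOrb F K α)
      = {W : Submodule F K | ∃ γ : K, γ ≠ 0 ∧ W = Submodule.span F {γ} ∧
          W ≠ Submodule.span F {1}} ∧
    (∀ α : K, α ∉ Set.range (algebraMap F K) →
      Nat.card ↥(projOrb F K α) = q) ∧
    Nat.card {S : Set (Submodule F K) //
        ∃ α : K, α ∉ Set.range (algebraMap F K) ∧ S = projOrb F K α}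
      = (q ^ (n - 1) - 1) / (q - 1) := by
  have hqF : Nat.card F = q := by rw [Nat.card_eq_fintype_card, hq]
  have hK : Nat.card K = q ^ n := by
    rw [Nat.card_eq_fintype_card, Module.card_eq_pow_finrank (K := F), hq, hn]
  refine ⟨fun α β => projOrb_eq_or_disjoint, biUnion_projOrb,
    fun α hα => by rw [card_projOrb hα, hqF], ?_⟩
  have hcount := card_projOrbs_mul (F := F) (K := K)
  rw [hqF, hK] at hcount
  exact Nat.eq_pow_pred_sub_one_div_of_mul_eq (hqF ▸ Finite.one_lt_card)
    (hn ▸ Module.finrank_pos) hcount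

/-- `P(F_{q^n}) ∖ {⟨1⟩}` is the disjoint union of `(q^{n-1}-1)/(q-1)`
projectivized `φ`-orbits, each of size `q`. -/
theorem stmt_13 (F K : Type) [Field F] [Field K] [Algebra F K]
    [Fintype F] [Fintype K] (q n : ℕ)
    (hq : Fintype.card F = q) (hn : Module.finrank F K = n) (hn2 : 2 ≤ n) :
    (∀ α β : K, α ∉ Set.range (algebraMap F K) → β ∉ Set.range (algebraMap F K) →
      projOrb F K α = projOrb F K β ∨ Disjoint (projOrb F K α) (projOrb F K β)) ∧
    (⋃ α ∈ {γ : K | γ ∉ Set.range (algebraMap F K)}, projOrb F K α)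
      = {W : Submodule F K | ∃ γ : K, γ ≠ 0 ∧ W = Submodule.span F {γ} ∧
          W ≠ Submodule.span F {1}} ∧
    (∀ α : K, α ∉ Set.range (algebraMap F K) →
      Nat.card ↥(projOrb F K α) = q) ∧
    Nat.card {S : Set (Submodule F K) //
        ∃ α : K, α ∉ Set.range (algebraMap F K) ∧ S = projOrb F K α}
      = (q ^ (n - 1) - 1) / (q - 1) :=
  stmt_13_general F K q n hq hn
end

section
/- Let U be an F_q-subspace of F_{q^n}, V ⊆ U a subspace of dimension ℓ equal to the maximum intersection dimension of Orb(U), and α ∈ F_{q^n}^* with V ⊆ U ∩ αU. Then for every λ ∈ F_q, V ⊆ U ∩ φ(α,λ)U, where φ(α,λ) = α/(1+λα). -/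
/-! If `x = α u` with `u, x ∈ U`, then `x = φ(α,c) (u + c x)` and `u + c x ∈ U`, so every element
of `U ∩ αU` lies in `φ(α,c) U`. Since `α ∉ 𝔽_q`, the denominator `1 + c α` never vanishes. -/

section MulLeftOrbit

variable {F K : Type*} [Field K]

theorem one_add_smul_ne_zero_of_notMem_range [Field F] [Algebra F K] {α : K}
    (hα : α ∉ Set.range (algebraMap F K)) (c : F) : 1 + c • α ≠ 0 := by
  intro h
  have hc : c ≠ 0 := by
    rintro rfl
    simp at h
  refine hα ⟨-c⁻¹, ?_⟩
  have hc' : algebraMap F K c ≠ 0 := by simpa using hc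
  rw [Algebra.smul_def] at h
  rw [map_neg, map_inv₀]
  field_simp
  linear_combination -h

variable [CommSemiring F] [Algebra F K]

theorem eq_div_one_add_smul_mul {α u x : K} (c : F) (hφ : 1 + c • α ≠ 0) (hx : x = α * u) :
    x = α / (1 + c • α) * (u + c • x) := by
  have hsum : u + c • (α * u) = (1 + c • α) * u := by rw [add_mul, one_mul, smul_mul_assoc]
  rw [hx, hsum]
  field_simp

theorem inf_map_mulLeft_le_map_mulLeft_div (U : Submodule F K) {α : K} (c : F)
    (hφ : 1 + c • α ≠ 0) :
    U ⊓ U.map (LinearMap.mulLeft F α) ≤ U.map (LinearMap.mulLeft F (α / (1 + c • α))) := by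
  rintro x ⟨hxU, u, hu, hux⟩
  exact ⟨u + c • x, U.add_mem hu (U.smul_mem c hxU),
    (eq_div_one_add_smul_mul c hφ hux.symm).symm⟩

end MulLeftOrbit

theorem stmt_14_general (F K : Type) [Field F] [Field K] [Algebra F K]
    (U : Submodule F K)
    (V : Submodule F K) (hVU : V ≤ U)
    (α : K) (hα : α ∉ Set.range (algebraMap F K))
    (hVint : V ≤ U ⊓ Submodule.map (LinearMap.mulLeft F α) U) :
    ∀ c : F, V ≤ U ⊓ Submodule.map (LinearMap.mulLeft F (α / (1 + c • α))) U := fun c =>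
  le_inf hVU <| hVint.trans <|
    inf_map_mulLeft_le_map_mulLeft_div U c (one_add_smul_ne_zero_of_notMem_range hα c)

/-- If `V ⊆ U` has dimension `ℓ` equal to the maximum intersection dimension of
`Orb(U)` and `V ⊆ U ∩ αU`, then `V ⊆ U ∩ φ(α,λ)U` for every `λ ∈ F_q`, where
`φ(α,λ) = α/(1+λα)`. -/
theorem stmt_14 (F K : Type) [Field F] [Field K] [Algebra F K]
    [Fintype F] [Fintype K] (q n k l : ℕ)
    (hq : Fintype.card F = q) (hn : Module.finrank F K = n)
    (U : Submodule F K) (hk : Module.finrank F U = k)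
    (V : Submodule F K) (hVU : V ≤ U) (hV : Module.finrank F V = l)
    (hmax : ∀ β : K, β ≠ 0 → Submodule.map (LinearMap.mulLeft F β) U ≠ U →
      Module.finrank F ↥(U ⊓ Submodule.map (LinearMap.mulLeft F β) U) ≤ l)
    (α : K) (hα : α ∉ Set.range (algebraMap F K))
    (hVint : V ≤ U ⊓ Submodule.map (LinearMap.mulLeft F α) U) :
    ∀ c : F, V ≤ U ⊓ Submodule.map (LinearMap.mulLeft F (α / (1 + c • α))) U :=
  stmt_14_general F K U V hVU α hα hVint
end

section
/- Let n be even and let U be a k-dimensional F_q-subspace of F_{q^n} with Stab(U) = F_q^* and dim(U ∩ αU) ≤ 2 for all α with αU ≠ U (i.e., Orb(U) is a full-length orbit with subspace distance 2k−4). Suppose F_{q^2} = U ∩ αU for some α ∈ F_{q^n}^*. Then {βF_q^* : F_{q^2} ⊆ U ∩ βU} = P(F_{q^2}), the set of F_q^*-classes of elements of F_{q^2}^*; in particular this set has exactly q+1 elements. -/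
open Submodule

/-- For a full-length orbit with distance `2k-4`, if `F_{q^2} = U ∩ αU` for some
`α`, then `{βF_q^* : F_{q^2} ⊆ U ∩ βU} = P(F_{q^2})`, a set of `q+1` elements. -/
theorem stmt_15 (F K : Type) [Field F] [Field K] [Algebra F K]
    [Fintype F] [Fintype K] (q n k : ℕ)
    (hq : Fintype.card F = q) (hn : Module.finrank F K = n) (hneven : 2 ∣ n)
    (U : Submodule F K) (hk : Module.finrank F U = k)
    (E : Subfield K) (hE : Nat.card E = q ^ 2)
    (hFE : Set.range (algebraMap F K) ⊆ (E : Set K))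
    (hstab : ∀ α : K, α ≠ 0 → Submodule.map (LinearMap.mulLeft F α) U = U →
      ∃ c : F, c ≠ 0 ∧ α = algebraMap F K c)
    (hdist : ∀ α : K, α ≠ 0 → Submodule.map (LinearMap.mulLeft F α) U ≠ U →
      Module.finrank F ↥(U ⊓ Submodule.map (LinearMap.mulLeft F α) U) ≤ 2)
    (α₀ : K) (hα₀ : α₀ ≠ 0)
    (hint : ((U ⊓ Submodule.map (LinearMap.mulLeft F α₀) U : Submodule F K) : Set K)
      = (E : Set K)) :
    {W : Submodule F K | ∃ β : K, β ≠ 0 ∧ W = Submodule.span F {β} ∧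
        (E : Set K) ⊆ ↑(U ⊓ Submodule.map (LinearMap.mulLeft F β) U)}
      = {W : Submodule F K | ∃ ρ : K, ρ ∈ E ∧ ρ ≠ 0 ∧ W = Submodule.span F {ρ}} ∧
    Nat.card {W : Submodule F K // ∃ β : K, β ≠ 0 ∧ W = Submodule.span F {β} ∧
        (E : Set K) ⊆ ↑(U ⊓ Submodule.map (LinearMap.mulLeft F β) U)}
      = q + 1 := by
  classical
  have hq2 : 2 ≤ q := by
    rw [← hq]; exact Fintype.one_lt_card
  have hModFin : Module.Finite F K := Module.finite_iff_finite.mpr inferInstance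
  -- E ⊆ U
  have hEU : (E : Set K) ⊆ (U : Set K) := by
    intro x hx
    rw [← hint] at hx
    exact (Submodule.mem_inf.mp hx).1
  -- the F-submodule with carrier E
  set Esub : Submodule F K :=
    { carrier := (E : Set K)
      add_mem' := fun ha hb => E.add_mem ha hb
      zero_mem' := E.zero_mem
      smul_mem' := fun c x hx => by
        rw [Algebra.smul_def]
        exact E.mul_mem (hFE ⟨c, rfl⟩) hx } with hEsub
  have hmemE : ∀ x : K, x ∈ Esub ↔ x ∈ E := fun x => Iff.rfl
  -- finrank of Esub is 2
  have hcardE : Nat.card ↥Esub = q ^ 2 := by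
    rw [← hE]
    exact Nat.card_congr (Equiv.subtypeEquivRight fun x => Iff.rfl)
  have hfrE : Module.finrank F ↥Esub = 2 := by
    have : Fintype ↥Esub := Fintype.ofFinite _
    have h1 : Fintype.card ↥Esub = q ^ Module.finrank F ↥Esub := by
      rw [Module.card_eq_pow_finrank (K := F) (V := ↥Esub), hq]
    have h2 : Fintype.card ↥Esub = q ^ 2 := by
      rw [← Nat.card_eq_fintype_card, hcardE]
    exact Nat.pow_right_injective hq2 (h1.symm.trans h2)
  -- pick e ∈ E not in the image of F
  have hex : ∃ e ∈ (E : Set K), e ∉ Set.range (algebraMap F K) := by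
    by_contra h
    push_neg at h
    have hsub : (E : Set K) ⊆ Set.range (algebraMap F K) := h
    have h1 : Nat.card (E : Set K) ≤ Nat.card (Set.range (algebraMap F K)) :=
      Nat.card_mono (Set.toFinite _) hsub
    have h2 : Nat.card (Set.range (algebraMap F K)) = q := by
      rw [Nat.card_range_of_injective (algebraMap F K).injective,
        Nat.card_eq_fintype_card, hq]
    have h3 : Nat.card (E : Set K) = q ^ 2 := by
      rw [← hE]; rfl
    rw [h2, h3] at h1
    nlinarith
  obtain ⟨e, heE, heR⟩ := hex
  have he0 : e ≠ 0 := by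
    rintro rfl
    exact heR ⟨0, by simp⟩
  have heU : Submodule.map (LinearMap.mulLeft F e) U ≠ U := by
    intro h
    obtain ⟨c, _, hc⟩ := hstab e he0 h
    exact heR ⟨c, hc.symm⟩
  -- E = U ⊓ eU
  have hle : Esub ≤ U ⊓ Submodule.map (LinearMap.mulLeft F e) U := by
    intro x hx
    have hxE : x ∈ E := hx
    refine Submodule.mem_inf.mpr ⟨hEU hxE, ?_⟩
    refine Submodule.mem_map.mpr ⟨e⁻¹ * x, hEU (E.mul_mem (E.inv_mem heE) hxE), ?_⟩
    rw [LinearMap.mulLeft_apply]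
    exact mul_inv_cancel_left₀ he0 x
  have hEq : U ⊓ Submodule.map (LinearMap.mulLeft F e) U = Esub := by
    refine (Submodule.eq_of_le_of_finrank_le hle ?_).symm
    rw [hfrE]
    exact hdist e he0 heU
  -- key: any β with E ⊆ U ⊓ βU lies in E
  have key : ∀ β : K, β ≠ 0 →
      (E : Set K) ⊆ ↑(U ⊓ Submodule.map (LinearMap.mulLeft F β) U) → β ∈ E := by
    intro β hβ hsub
    have h1 : (1 : K) ∈ U ⊓ Submodule.map (LinearMap.mulLeft F β) U := hsub E.one_mem
    obtain ⟨u, hu, hu1⟩ := Submodule.mem_map.mp (Submodule.mem_inf.mp h1).2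
    rw [LinearMap.mulLeft_apply] at hu1
    have hu' : u = β⁻¹ := eq_inv_of_mul_eq_one_right hu1
    have h2 : e⁻¹ ∈ (E : Set K) := E.inv_mem heE
    have h2' : e⁻¹ ∈ U ⊓ Submodule.map (LinearMap.mulLeft F β) U := hsub h2
    obtain ⟨v, hv, hv2⟩ := Submodule.mem_map.mp (Submodule.mem_inf.mp h2').2
    rw [LinearMap.mulLeft_apply] at hv2
    have hβU : β⁻¹ ∈ U := hu' ▸ hu
    have hβe : β⁻¹ ∈ Submodule.map (LinearMap.mulLeft F e) U := by
      refine Submodule.mem_map.mpr ⟨v, hv, ?_⟩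
      rw [LinearMap.mulLeft_apply]
      have hb : β * (e * v) = 1 := by
        rw [show β * (e * v) = e * (β * v) by ring, hv2, mul_inv_cancel₀ he0]
      exact eq_inv_of_mul_eq_one_right hb
    have hmem : β⁻¹ ∈ Esub := hEq ▸ Submodule.mem_inf.mpr ⟨hβU, hβe⟩
    have hinv : β⁻¹ ∈ E := hmem
    simpa using E.inv_mem hinv
  -- the set equality
  have hset : {W : Submodule F K | ∃ β : K, β ≠ 0 ∧ W = Submodule.span F {β} ∧
        (E : Set K) ⊆ ↑(U ⊓ Submodule.map (LinearMap.mulLeft F β) U)}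
      = {W : Submodule F K | ∃ ρ : K, ρ ∈ E ∧ ρ ≠ 0 ∧ W = Submodule.span F {ρ}} := by
    ext W
    simp only [Set.mem_setOf_eq]
    constructor
    · rintro ⟨β, hβ0, rfl, hsub⟩
      exact ⟨β, key β hβ0 hsub, hβ0, rfl⟩
    · rintro ⟨ρ, hρE, hρ0, rfl⟩
      refine ⟨ρ, hρ0, rfl, ?_⟩
      intro x hx
      refine Submodule.mem_inf.mpr ⟨hEU hx, ?_⟩
      refine Submodule.mem_map.mpr ⟨ρ⁻¹ * x, hEU (E.mul_mem (E.inv_mem hρE) hx), ?_⟩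
      rw [LinearMap.mulLeft_apply]
      exact mul_inv_cancel_left₀ hρ0 x
  refine ⟨hset, ?_⟩
  -- counting
  have hcardeq : Nat.card {W : Submodule F K // ∃ β : K, β ≠ 0 ∧ W = Submodule.span F {β} ∧
        (E : Set K) ⊆ ↑(U ⊓ Submodule.map (LinearMap.mulLeft F β) U)}
      = Nat.card {W : Submodule F K // ∃ ρ : K, ρ ∈ E ∧ ρ ≠ 0 ∧ W = Submodule.span F {ρ}} :=
    Nat.card_congr (Equiv.subtypeEquivRight fun W => Set.ext_iff.mp hset W)
  rw [hcardeq]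
  set P2 := {W : Submodule F K // ∃ ρ : K, ρ ∈ E ∧ ρ ≠ 0 ∧ W = Submodule.span F {ρ}} with hP2
  set A := {x : K // x ∈ E ∧ x ≠ 0} with hA
  have hfinSub : Finite (Submodule F K) := Finite.of_injective _ SetLike.coe_injective
  have : Fintype P2 := Fintype.ofFinite _
  have : Fintype A := Fintype.ofFinite _
  -- the fiber map
  let f : A → P2 := fun a => ⟨Submodule.span F {a.1}, ⟨a.1, a.2.1, a.2.2, rfl⟩⟩
  have hA1 : Nat.card A = ∑ W : P2, Nat.card {a : A // f a = W} := by
    rw [← Nat.card_congr (Equiv.sigmaFiberEquiv f), Nat.card_eq_fintype_card,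
      Fintype.card_sigma]
    simp [Nat.card_eq_fintype_card]
  have hfiber : ∀ W : P2, Nat.card {a : A // f a = W} = q - 1 := by
    intro W
    obtain ⟨ρ, hρE, hρ0, hWspan⟩ := W.2
    have hsp : ∀ c : F, c ≠ 0 →
        Submodule.span F {algebraMap F K c * ρ} = Submodule.span F {ρ} := by
      intro c hc
      rw [← Algebra.smul_def]
      exact Submodule.span_singleton_smul_eq (isUnit_iff_ne_zero.mpr hc) ρ
    let g : {c : F // c ≠ 0} → {a : A // f a = W} := fun c =>
      ⟨⟨algebraMap F K c.1 * ρ, E.mul_mem (hFE ⟨c.1, rfl⟩) hρE,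
          mul_ne_zero ((map_ne_zero (algebraMap F K)).mpr c.2) hρ0⟩,
        Subtype.ext (by simpa [f, hsp c.1 c.2] using hWspan.symm)⟩
    have hgb : Function.Bijective g := by
      constructor
      · intro c₁ c₂ hcc
        have h1 : algebraMap F K c₁.1 * ρ = algebraMap F K c₂.1 * ρ :=
          congrArg (fun x => x.1.1) hcc
        have h2 : algebraMap F K c₁.1 = algebraMap F K c₂.1 :=
          mul_right_cancel₀ hρ0 h1
        exact Subtype.ext ((algebraMap F K).injective h2)
      · intro a
        have hspan : Submodule.span F {a.1.1} = Submodule.span F {ρ} := by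
          have := congrArg Subtype.val a.2
          simpa [f, ← hWspan] using this
        have hmem : a.1.1 ∈ Submodule.span F {ρ} := by
          rw [← hspan]
          exact Submodule.mem_span_singleton_self _
        obtain ⟨c, hc⟩ := Submodule.mem_span_singleton.mp hmem
        have hc0 : c ≠ 0 := by
          rintro rfl
          exact a.1.2.2 (by simpa using hc.symm)
        refine ⟨⟨c, hc0⟩, ?_⟩
        apply Subtype.ext
        apply Subtype.ext
        show algebraMap F K c * ρ = a.1.1
        rw [← Algebra.smul_def, hc]
    have h1 : Nat.card {a : A // f a = W} = Nat.card {c : F // c ≠ 0} :=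
      (Nat.card_congr (Equiv.ofBijective g hgb)).symm
    have h2 : Nat.card {c : F // c ≠ 0} = q - 1 := by
      rw [← Nat.card_congr (unitsEquivNeZero (G₀ := F)), Nat.card_eq_fintype_card,
        Fintype.card_units, hq]
    rw [h1, h2]
  have hA2 : Nat.card A = q ^ 2 - 1 := by
    have e1 : A ≃ {y : ↥E // y ≠ 0} :=
      { toFun := fun a => ⟨⟨a.1, a.2.1⟩, fun h => a.2.2 (congrArg Subtype.val h)⟩
        invFun := fun y => ⟨y.1.1, y.1.2, fun h => y.2 (Subtype.ext h)⟩
        left_inv := fun a => rfl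
        right_inv := fun y => rfl }
    have : Fintype ↥E := Fintype.ofFinite _
    rw [Nat.card_congr e1, ← Nat.card_congr (unitsEquivNeZero (G₀ := ↥E)),
      Nat.card_eq_fintype_card, Fintype.card_units, ← Nat.card_eq_fintype_card, hE]
  have hsum : Nat.card A = Nat.card P2 * (q - 1) := by
    rw [hA1]
    rw [Finset.sum_congr rfl (fun W _ => hfiber W), Finset.sum_const, smul_eq_mul,
      Finset.card_univ, Nat.card_eq_fintype_card]
  have hmul : Nat.card P2 * (q - 1) = q ^ 2 - 1 := by rw [← hsum, hA2]
  have htarget : (q + 1) * (q - 1) = q ^ 2 - 1 := by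
    have h1le : 1 ≤ q := by omega
    have h2le : 1 ≤ q ^ 2 := Nat.one_le_pow _ _ (by omega)
    zify [h1le, h2le]
    ring
  exact Nat.eq_of_mul_eq_mul_right (by omega : 0 < q - 1) (hmul.trans htarget.symm)
end

section
/- Let U be a k-dimensional F_q-subspace of F_{q^n} with Stab(U) = F_q^* and maximal intersection dimension 2 (i.e., dim(U ∩ αU) ≤ 2 for αU ≠ U, with equality for some α). Then there is at most one 2-dimensional subspace V such that V = U ∩ αU for some α ∈ F_{q^n}^* and V = γF_{q^2} for some γ ∈ F_{q^n}^*. -/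
/-!
A subspace `V = γ E` is stable under multiplication by every nonzero `ρ ∈ E`. Since `V` is
`2`-dimensional over `F`, `E` is not contained in `F`, so some `ρ ∈ E \ F` exists; then `ρ U ≠ U`
by the stabiliser hypothesis. Two distinct such subspaces `V₁, V₂ ≤ U` would both lie in
`U ∩ ρ U`, whose dimension is at most `2`, while `V₁ + V₂` has dimension at least `3`.
-/

open Pointwise Module

section

variable {F K : Type*} [Field F] [Field K] [Algebra F K]

theorem Subfield.smul_coe_eq_self {E : Subfield K} {ρ : K} (hρE : ρ ∈ E) (hρ : ρ ≠ 0) :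
    ρ • (E : Set K) = E := by
  refine (Set.smul_set_subset_iff.2 fun x hx => E.mul_mem hρE hx).antisymm fun x hx => ?_
  exact ⟨ρ⁻¹ * x, E.mul_mem (E.inv_mem hρE) hx, by simp [smul_eq_mul, hρ]⟩

theorem Submodule.coe_map_mulLeft (ρ : K) (V : Submodule F K) :
    (V.map (LinearMap.mulLeft F ρ) : Set K) = ρ • (V : Set K) := by
  ext x
  simp [Set.mem_smul_set]

theorem Submodule.map_mulLeft_eq_self_of_coe_eq_smul {E : Subfield K} {V : Submodule F K}
    {γ ρ : K} (hV : (V : Set K) = γ • (E : Set K)) (hρE : ρ ∈ E) (hρ : ρ ≠ 0) :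
    V.map (LinearMap.mulLeft F ρ) = V :=
  SetLike.coe_injective <| by
    rw [Submodule.coe_map_mulLeft, hV, smul_comm, Subfield.smul_coe_eq_self hρE hρ]

theorem exists_mem_subfield_notMem_range_algebraMap {E : Subfield K} {V : Submodule F K} {γ : K}
    (hV : (V : Set K) = γ • (E : Set K)) (hdim : 1 < finrank F V) :
    ∃ ρ ∈ E, ρ ∉ Set.range (algebraMap F K) := by
  by_contra! hEF
  have hVγ : V ≤ F ∙ γ := fun x hx => by
    obtain ⟨e, he, rfl⟩ : x ∈ γ • (E : Set K) := hV ▸ hx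
    obtain ⟨c, rfl⟩ := hEF e he
    exact Submodule.mem_span_singleton.2 ⟨c, by simp [Algebra.smul_def, mul_comm]⟩
  have hγ : finrank F (F ∙ γ) ≤ 1 := (finrank_span_le_card ({γ} : Set K)).trans (by simp)
  have := Submodule.finrank_mono hVγ
  omega

end

theorem Submodule.le_inf_map_of_le_of_map_eq {R M : Type*} [Semiring R] [AddCommMonoid M]
    [Module R M] {U V : Submodule R M} {f : M →ₗ[R] M} (hVU : V ≤ U) (hf : V.map f = V) :
    V ≤ U ⊓ U.map f :=
  le_inf hVU (hf ▸ Submodule.map_mono hVU)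

theorem Submodule.finrank_lt_finrank_sup_of_ne {R M : Type*} [DivisionRing R] [AddCommGroup M]
    [Module R M] [FiniteDimensional R M] {V₁ V₂ : Submodule R M} (hne : V₁ ≠ V₂)
    (hdim : finrank R V₁ = finrank R V₂) : finrank R V₁ < finrank R ↥(V₁ ⊔ V₂) := by
  refine Submodule.finrank_lt_finrank_of_lt (lt_of_le_of_ne le_sup_left fun h => hne ?_)
  exact (Submodule.eq_of_le_of_finrank_eq (sup_eq_left.1 h.symm) hdim.symm).symm

theorem stmt_16_general (F K : Type) [Field F] [Field K] [Algebra F K] [Fintype K]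
    (U : Submodule F K) (E : Subfield K)
    (hstab : ∀ α : K, α ≠ 0 → Submodule.map (LinearMap.mulLeft F α) U = U →
      ∃ c : F, c ≠ 0 ∧ α = algebraMap F K c)
    (hdist : ∀ α : K, α ≠ 0 → Submodule.map (LinearMap.mulLeft F α) U ≠ U →
      Module.finrank F ↥(U ⊓ Submodule.map (LinearMap.mulLeft F α) U) ≤ 2) :
    ∀ V₁ V₂ : Submodule F K,
      ((∃ α : K, α ≠ 0 ∧ V₁ = U ⊓ Submodule.map (LinearMap.mulLeft F α) U ∧
          Module.finrank F V₁ = 2) ∧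
        ∃ γ : K, γ ≠ 0 ∧ (V₁ : Set K) = γ • (E : Set K)) →
      ((∃ α : K, α ≠ 0 ∧ V₂ = U ⊓ Submodule.map (LinearMap.mulLeft F α) U ∧
          Module.finrank F V₂ = 2) ∧
        ∃ γ : K, γ ≠ 0 ∧ (V₂ : Set K) = γ • (E : Set K)) →
      V₁ = V₂ := by
  rintro V₁ V₂ ⟨⟨α₁, -, hV₁, hd₁⟩, γ₁, -, hs₁⟩ ⟨⟨α₂, -, hV₂, hd₂⟩, γ₂, -, hs₂⟩
  by_contra hne
  have : Module.Finite F K := .of_finite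
  obtain ⟨ρ, hρE, hρF⟩ := exists_mem_subfield_notMem_range_algebraMap hs₁ (by omega)
  have hρ : ρ ≠ 0 := fun h => hρF ⟨0, by simp [h]⟩
  have hρU : U.map (LinearMap.mulLeft F ρ) ≠ U := fun h => by
    obtain ⟨c, -, rfl⟩ := hstab ρ hρ h
    exact hρF ⟨c, rfl⟩
  have hle : V₁ ⊔ V₂ ≤ U ⊓ U.map (LinearMap.mulLeft F ρ) := sup_le
    (Submodule.le_inf_map_of_le_of_map_eq (hV₁ ▸ inf_le_left)
      (Submodule.map_mulLeft_eq_self_of_coe_eq_smul hs₁ hρE hρ))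
    (Submodule.le_inf_map_of_le_of_map_eq (hV₂ ▸ inf_le_left)
      (Submodule.map_mulLeft_eq_self_of_coe_eq_smul hs₂ hρE hρ))
  have := Submodule.finrank_lt_finrank_sup_of_ne hne (hd₁.trans hd₂.symm)
  have := Submodule.finrank_mono hle
  have := hdist ρ hρ hρU
  omega

/-- For a full-length orbit with maximal intersection dimension `2`, there is at
most one `2`-dimensional subspace `V` with `V = U ∩ αU` for some `α` and
`V = γ·F_{q^2}` for some `γ`. -/
theorem stmt_16 (F K : Type) [Field F] [Field K] [Algebra F K]
    [Fintype F] [Fintype K] (q n k : ℕ)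
    (hq : Fintype.card F = q) (hn : Module.finrank F K = n)
    (U : Submodule F K) (hk : Module.finrank F U = k)
    (E : Subfield K) (hE : Nat.card E = q ^ 2)
    (hFE : Set.range (algebraMap F K) ⊆ (E : Set K))
    (hstab : ∀ α : K, α ≠ 0 → Submodule.map (LinearMap.mulLeft F α) U = U →
      ∃ c : F, c ≠ 0 ∧ α = algebraMap F K c)
    (hdist : ∀ α : K, α ≠ 0 → Submodule.map (LinearMap.mulLeft F α) U ≠ U →
      Module.finrank F ↥(U ⊓ Submodule.map (LinearMap.mulLeft F α) U) ≤ 2)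
    (hex : ∃ α : K, α ≠ 0 ∧ Submodule.map (LinearMap.mulLeft F α) U ≠ U ∧
      Module.finrank F ↥(U ⊓ Submodule.map (LinearMap.mulLeft F α) U) = 2) :
    ∀ V₁ V₂ : Submodule F K,
      ((∃ α : K, α ≠ 0 ∧ V₁ = U ⊓ Submodule.map (LinearMap.mulLeft F α) U ∧
          Module.finrank F V₁ = 2) ∧
        ∃ γ : K, γ ≠ 0 ∧ (V₁ : Set K) = γ • (E : Set K)) →
      ((∃ α : K, α ≠ 0 ∧ V₂ = U ⊓ Submodule.map (LinearMap.mulLeft F α) U ∧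
          Module.finrank F V₂ = 2) ∧
        ∃ γ : K, γ ≠ 0 ∧ (V₂ : Set K) = γ • (E : Set K)) →
      V₁ = V₂ :=
  stmt_16_general F K U E hstab hdist
end

section
/- Let U be a k-dimensional F_q-subspace of F_{q^n} with Stab(U) = F_q^*, maximal intersection dimension 2, and suppose V = U ∩ αU is 2-dimensional for some α ∈ F_{q^n}^*. Then the set A_V = {βF_q^* : V ⊆ U ∩ βU} has exactly q+1 elements. -/
/-- For a full-length orbit with maximal intersection dimension `2` and a
`2`-dimensional intersection `V = U ∩ αU`, the set
`A_V = {βF_q^* : V ⊆ U ∩ βU}` has exactly `q+1` elements. -/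
theorem stmt_17 (F K : Type) [Field F] [Field K] [Algebra F K]
    [Fintype F] [Fintype K] (q n k : ℕ)
    (hq : Fintype.card F = q) (hn : Module.finrank F K = n)
    (U : Submodule F K) (hk : Module.finrank F U = k) (hk3 : 2 < k)
    (hstab : ∀ α : K, α ≠ 0 → Submodule.map (LinearMap.mulLeft F α) U = U →
      ∃ c : F, c ≠ 0 ∧ α = algebraMap F K c)
    (hdist : ∀ α : K, α ≠ 0 → Submodule.map (LinearMap.mulLeft F α) U ≠ U →
      Module.finrank F ↥(U ⊓ Submodule.map (LinearMap.mulLeft F α) U) ≤ 2)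
    (α : K) (hα : α ≠ 0)
    (V : Submodule F K)
    (hV : V = U ⊓ Submodule.map (LinearMap.mulLeft F α) U)
    (hV2 : Module.finrank F V = 2) :
    Nat.card {W : Submodule F K // ∃ β : K, β ≠ 0 ∧ W = Submodule.span F {β} ∧
        V ≤ U ⊓ Submodule.map (LinearMap.mulLeft F β) U}
      = q + 1 := by
  classical
  have hFD : FiniteDimensional F K := Module.finite_iff_finite.mpr inferInstance
  have hVU : V ≤ U := le_of_eq_of_le hV inf_le_left
  have hVα : V ≤ Submodule.map (LinearMap.mulLeft F α) U := le_of_eq_of_le hV inf_le_right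
  -- α is not an F-scalar
  have halg : ∀ c : F, α ≠ algebraMap F K c := by
    intro c hc
    have hc0 : c ≠ 0 := fun h => hα (by rw [hc, h, map_zero])
    have hmap : Submodule.map (LinearMap.mulLeft F α) U = U := by
      ext x
      constructor
      · rintro ⟨y, hy, rfl⟩
        simpa [LinearMap.mulLeft_apply, hc, Algebra.smul_def] using U.smul_mem c hy
      · intro hx
        refine ⟨c⁻¹ • x, U.smul_mem _ hx, ?_⟩
        rw [LinearMap.mulLeft_apply, hc, Algebra.smul_def, ← mul_assoc, ← map_mul,
          mul_inv_cancel₀ hc0, map_one, one_mul]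
    have hVeq : V = U := by rw [hV, hmap, inf_idem]
    rw [hVeq, hk] at hV2
    omega
  have halg' : ∀ c : F, α⁻¹ ≠ algebraMap F K c := by
    intro c hc
    have hc0 : c ≠ 0 := by
      rintro rfl
      rw [map_zero, inv_eq_zero] at hc
      exact hα hc
    exact halg c⁻¹ (by rw [map_inv₀, ← hc, inv_inv])
  -- pick two independent vectors of V
  obtain ⟨f, hf⟩ := exists_linearIndependent_of_le_finrank (R := F) (M := ↥V) (n := 2)
    (le_of_eq hV2.symm)
  have hfK : LinearIndependent F fun i => ((f i : K)) := hf.map' V.subtype V.ker_subtype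
  set v : K := (f 0 : K) with hv_def
  set w : K := (f 1 : K) with hw_def
  have hpair : ∀ a b : F, a • v + b • w = 0 → a = 0 ∧ b = 0 := by
    intro a b hab
    have h := Fintype.linearIndependent_iff.mp hfK ![a, b] (by
      rw [Fin.sum_univ_two]
      simpa using hab)
    exact ⟨h 0, h 1⟩
  have hv0 : v ≠ 0 := by
    intro h
    exact one_ne_zero ((hpair 1 0 (by simp [h])).1)
  have hw0 : w ≠ 0 := by
    intro h
    exact one_ne_zero ((hpair 0 1 (by simp [h])).2)
  have hvV : v ∈ V := (f 0).2
  have hwV : w ∈ V := (f 1).2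
  have hvU : v ∈ U := hVU hvV
  have hwU : w ∈ U := hVU hwV
  have hαv : α⁻¹ * v ∈ U := by
    obtain ⟨u, hu, huv⟩ := hVα hvV
    have : α⁻¹ * v = u := by
      rw [← huv, LinearMap.mulLeft_apply, inv_mul_cancel_left₀ hα]
    rwa [this]
  have hαw : α⁻¹ * w ∈ U := by
    obtain ⟨u, hu, huw⟩ := hVα hwV
    have : α⁻¹ * w = u := by
      rw [← huw, LinearMap.mulLeft_apply, inv_mul_cancel_left₀ hα]
    rwa [this]
  -- membership in scaled copies of U
  have hmem : ∀ (c : K), c ≠ 0 → ∀ x : K,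
      (x ∈ Submodule.map (LinearMap.mulLeft F c) U ↔ c⁻¹ * x ∈ U) := by
    intro c hc x
    constructor
    · rintro ⟨u, hu, rfl⟩
      simpa [LinearMap.mulLeft_apply, inv_mul_cancel_left₀ hc] using hu
    · intro h
      exact ⟨c⁻¹ * x, h, by rw [LinearMap.mulLeft_apply, mul_inv_cancel_left₀ hc]⟩
  -- the multiplier space
  set Minv : Submodule F K :=
    Submodule.map (LinearMap.mulLeft F v⁻¹) U ⊓ Submodule.map (LinearMap.mulLeft F w⁻¹) U
    with hMinv_def
  have hMinv : ∀ x : K, x ∈ Minv ↔ v * x ∈ U ∧ w * x ∈ U := by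
    intro x
    rw [hMinv_def, Submodule.mem_inf, hmem _ (inv_ne_zero hv0), hmem _ (inv_ne_zero hw0),
      inv_inv, inv_inv]
  have h1M : (1 : K) ∈ Minv := (hMinv 1).mpr ⟨by simpa using hvU, by simpa using hwU⟩
  have hαM : α⁻¹ ∈ Minv := (hMinv _).mpr
    ⟨by rw [mul_comm]; exact hαv, by rw [mul_comm]; exact hαw⟩
  -- 1 and α⁻¹ are independent
  have hind : LinearIndependent F ![(1 : K), α⁻¹] := by
    rw [LinearIndependent.pair_iff]
    intro s t hst
    by_cases ht : t = 0
    · subst ht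
      rw [zero_smul, add_zero] at hst
      rcases smul_eq_zero.mp hst with h | h
      · exact ⟨h, rfl⟩
      · exact absurd h one_ne_zero
    · exfalso
      have h1 : t • α⁻¹ = -(s • (1 : K)) := by
        rw [eq_neg_iff_add_eq_zero, add_comm]
        exact hst
      have h2 : α⁻¹ = (-(t⁻¹ * s)) • (1 : K) := by
        calc α⁻¹ = t⁻¹ • (t • α⁻¹) := by rw [smul_smul, inv_mul_cancel₀ ht, one_smul]
        _ = (-(t⁻¹ * s)) • (1 : K) := by rw [h1, smul_neg, smul_smul, neg_smul]
      exact halg' (-(t⁻¹ * s)) (by rw [Algebra.algebraMap_eq_smul_one]; exact h2)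
  -- finrank of span {1, α⁻¹} is 2
  have hrange : Set.range ![(1 : K), α⁻¹] = {1, α⁻¹} := by
    ext x
    simp only [Set.mem_range, Fin.exists_fin_two, Matrix.cons_val_zero, Matrix.cons_val_one,
      Matrix.head_cons, Set.mem_insert_iff, Set.mem_singleton_iff]
    exact ⟨fun h => h.imp Eq.symm Eq.symm, fun h => h.imp Eq.symm Eq.symm⟩
  have hsp2 : Module.finrank F (Submodule.span F {(1 : K), α⁻¹}) = 2 := by
    have h := finrank_span_eq_card hind
    rwa [hrange, Fintype.card_fin] at h
  -- v/w is not an F-scalar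
  have hγ0 : v * w⁻¹ ≠ 0 := mul_ne_zero hv0 (inv_ne_zero hw0)
  have hγalg : ∀ c : F, v * w⁻¹ ≠ algebraMap F K c := by
    intro c hc
    have hvw : v = c • w := by
      rw [Algebra.smul_def, ← hc, mul_assoc, inv_mul_cancel₀ hw0, mul_one]
    have := (hpair 1 (-c) (by rw [one_smul, neg_smul, hvw, add_neg_cancel])).1
    exact one_ne_zero this
  have hγU : Submodule.map (LinearMap.mulLeft F (v * w⁻¹)) U ≠ U := by
    intro h
    obtain ⟨c, _, hc⟩ := hstab _ hγ0 h
    exact hγalg c hc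
  have hT2 : Module.finrank F
      ↥(U ⊓ Submodule.map (LinearMap.mulLeft F (v * w⁻¹)) U) ≤ 2 := hdist _ hγ0 hγU
  -- multiplication by v as a linear equivalence
  let e : K ≃ₗ[F] K :=
    { toFun := fun x => v * x
      map_add' := fun x y => mul_add v x y
      map_smul' := fun c x => by simp [Algebra.smul_def]; ring
      invFun := fun x => v⁻¹ * x
      left_inv := fun x => by
        show v⁻¹ * (v * x) = x
        rw [inv_mul_cancel_left₀ hv0]
      right_inv := fun x => by
        show v * (v⁻¹ * x) = x
        rw [mul_inv_cancel_left₀ hv0] }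
  have hmapMinv : Submodule.map (e : K →ₗ[F] K) Minv =
      U ⊓ Submodule.map (LinearMap.mulLeft F (v * w⁻¹)) U := by
    ext x
    rw [Submodule.mem_map_equiv]
    have hesymm : e.symm x = v⁻¹ * x := rfl
    rw [hesymm, hMinv, Submodule.mem_inf, hmem _ hγ0]
    have h1 : v * (v⁻¹ * x) = x := by rw [mul_inv_cancel_left₀ hv0]
    have h2 : w * (v⁻¹ * x) = (v * w⁻¹)⁻¹ * x := by
      rw [mul_inv_rev, inv_inv]
      ring
    rw [h1, h2]
  have hMinv2 : Module.finrank F Minv ≤ 2 := by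
    have h := LinearEquiv.finrank_map_eq e Minv
    rw [hmapMinv] at h
    rw [← h]
    exact hT2
  -- Minv = span {1, α⁻¹}
  have hMeq : Submodule.span F {(1 : K), α⁻¹} = Minv := by
    apply Submodule.eq_of_le_of_finrank_le
    · rw [Submodule.span_le]
      intro x hx
      rcases hx with rfl | hx
      · exact h1M
      · rw [Set.mem_singleton_iff] at hx
        subst hx
        exact hαM
    · rw [hsp2]
      exact hMinv2
  -- V = span {v, w}
  have hrange2 : (Set.range fun i => ((f i : K))) = {v, w} := by
    ext x
    simp only [Set.mem_range, Fin.exists_fin_two, Set.mem_insert_iff, Set.mem_singleton_iff,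
      hv_def, hw_def]
    exact ⟨fun h => h.imp Eq.symm Eq.symm, fun h => h.imp Eq.symm Eq.symm⟩
  have hVspan : V = Submodule.span F {v, w} := by
    symm
    apply Submodule.eq_of_le_of_finrank_le
    · rw [Submodule.span_le]
      intro x hx
      rcases hx with rfl | hx
      · exact hvV
      · rw [Set.mem_singleton_iff] at hx
        subst hx
        exact hwV
    · have h := finrank_span_eq_card hfK
      rw [hrange2, Fintype.card_fin] at h
      rw [hV2, h]
  -- membership criterion
  have hcrit : ∀ β : K, β ≠ 0 →
      ((V ≤ U ⊓ Submodule.map (LinearMap.mulLeft F β) U) ↔ β⁻¹ ∈ Minv) := by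
    intro β hβ
    constructor
    · intro hle
      rw [hMinv]
      have hv' := hle hvV
      have hw' := hle hwV
      rw [Submodule.mem_inf, hmem _ hβ] at hv' hw'
      exact ⟨by rw [mul_comm]; exact hv'.2, by rw [mul_comm]; exact hw'.2⟩
    · intro hβM
      rw [hMinv] at hβM
      intro x hx
      rw [Submodule.mem_inf, hmem _ hβ]
      refine ⟨hVU hx, ?_⟩
      rw [hVspan] at hx
      obtain ⟨a, b, rfl⟩ := Submodule.mem_span_pair.mp hx
      have heq : β⁻¹ * (a • v + b • w) = a • (v * β⁻¹) + b • (w * β⁻¹) := by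
        simp only [Algebra.smul_def, mul_add]
        ring
      rw [heq]
      exact U.add_mem (U.smul_mem _ hβM.1) (U.smul_mem _ hβM.2)
  -- the candidate generators
  set bb : F → K := fun l => (algebraMap F K l + α⁻¹)⁻¹ with hbb_def
  have hbb0 : ∀ l : F, algebraMap F K l + α⁻¹ ≠ 0 := by
    intro l h
    apply halg' (-l)
    rw [map_neg]
    linear_combination h
  have hbbne : ∀ l : F, bb l ≠ 0 := fun l => inv_ne_zero (hbb0 l)
  have gmem1 : V ≤ U ⊓ Submodule.map (LinearMap.mulLeft F (1 : K)) U := by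
    rw [LinearMap.mulLeft_one, Submodule.map_id]
    exact le_inf hVU hVU
  have gmeml : ∀ l : F, V ≤ U ⊓ Submodule.map (LinearMap.mulLeft F (bb l)) U := by
    intro l
    rw [hcrit _ (hbbne l), hbb_def, inv_inv]
    apply Minv.add_mem
    · rw [Algebra.algebraMap_eq_smul_one]
      exact Minv.smul_mem l h1M
    · exact hαM
  -- the bijection with Option F
  let S := {W : Submodule F K // ∃ β : K, β ≠ 0 ∧ W = Submodule.span F {β} ∧
      V ≤ U ⊓ Submodule.map (LinearMap.mulLeft F β) U}
  let g : Option F → S := fun o => o.elim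
    ⟨Submodule.span F {1}, 1, one_ne_zero, rfl, gmem1⟩
    (fun l => ⟨Submodule.span F {bb l}, bb l, hbbne l, rfl, gmeml l⟩)
  have hgval : ∀ o : Option F, (g o).1 = o.elim (Submodule.span F {1})
      (fun l => Submodule.span F {bb l}) := by
    intro o
    cases o <;> rfl
  have ginj : Function.Injective g := by
    intro o p h
    have hval : o.elim (Submodule.span F {(1:K)}) (fun l => Submodule.span F {bb l}) =
        p.elim (Submodule.span F {(1:K)}) (fun l => Submodule.span F {bb l}) := by
      rw [← hgval, ← hgval, h]
    cases o with
    | none =>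
      cases p with
      | none => rfl
      | some l =>
        exfalso
        simp only [Option.elim] at hval
        have h1 : (1 : K) ∈ Submodule.span F {bb l} := by
          rw [← hval]
          exact Submodule.mem_span_singleton_self 1
        obtain ⟨c, hc⟩ := Submodule.mem_span_singleton.mp h1
        have heq : algebraMap F K c / (algebraMap F K l + α⁻¹) = 1 := by
          rw [div_eq_mul_inv]
          rw [Algebra.smul_def, hbb_def] at hc
          exact hc
        have heq2 := (div_eq_one_iff_eq (hbb0 l)).mp heq
        apply halg' (c - l)
        rw [map_sub]
        linear_combination -heq2
    | some l =>
      cases p with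
      | none =>
        exfalso
        simp only [Option.elim] at hval
        have h1 : bb l ∈ Submodule.span F {(1 : K)} := by
          rw [← hval]
          exact Submodule.mem_span_singleton_self _
        obtain ⟨c, hc⟩ := Submodule.mem_span_singleton.mp h1
        have hc0 : c ≠ 0 := by
          rintro rfl
          rw [zero_smul] at hc
          exact hbbne l hc.symm
        have heq : algebraMap F K l + α⁻¹ = algebraMap F K c⁻¹ := by
          simp only [Algebra.smul_def, mul_one, hbb_def] at hc
          rw [map_inv₀, hc, inv_inv]
        apply halg' (c⁻¹ - l)
        rw [map_sub]
        linear_combination heq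
      | some m =>
        congr 1
        simp only [Option.elim] at hval
        have h1 : bb m ∈ Submodule.span F {bb l} := by
          rw [hval]
          exact Submodule.mem_span_singleton_self _
        obtain ⟨c, hc⟩ := Submodule.mem_span_singleton.mp h1
        have hc0 : c ≠ 0 := by
          rintro rfl
          rw [zero_smul] at hc
          exact hbbne m hc.symm
        simp only [Algebra.smul_def, hbb_def] at hc
        -- hc : algebraMap c * (algebraMap l + α⁻¹)⁻¹ = (algebraMap m + α⁻¹)⁻¹
        have hc' : algebraMap F K l + α⁻¹ = algebraMap F K c * (algebraMap F K m + α⁻¹) := by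
          have h4 : algebraMap F K c * (algebraMap F K l + α⁻¹)⁻¹ *
              ((algebraMap F K l + α⁻¹) * (algebraMap F K m + α⁻¹)) =
              (algebraMap F K m + α⁻¹)⁻¹ *
              ((algebraMap F K l + α⁻¹) * (algebraMap F K m + α⁻¹)) := by rw [hc]
          rw [mul_assoc (algebraMap F K c), ← mul_assoc (algebraMap F K l + α⁻¹)⁻¹,
            inv_mul_cancel₀ (hbb0 l), one_mul,
            mul_comm (algebraMap F K l + α⁻¹) (algebraMap F K m + α⁻¹),
            ← mul_assoc (algebraMap F K m + α⁻¹)⁻¹,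
            inv_mul_cancel₀ (hbb0 m), one_mul] at h4
          exact h4.symm
        by_cases hc1 : c = 1
        · subst hc1
          rw [map_one, one_mul] at hc'
          have : algebraMap F K l = algebraMap F K m := by linear_combination hc'
          exact ((algebraMap F K).injective this)
        · exfalso
          have hd0 : (1 : F) - c ≠ 0 := fun h => hc1 (by linear_combination -h)
          apply halg' ((c * m - l) / (1 - c))
          rw [map_div₀, map_sub, map_sub, map_mul, map_one]
          rw [eq_div_iff (by
            intro h
            apply hd0
            apply (algebraMap F K).injective
            rw [map_sub, map_one, map_zero]
            exact h)]
          linear_combination hc'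
  have gsurj : Function.Surjective g := by
    rintro ⟨W, β, hβ0, rfl, hle⟩
    have hβM : β⁻¹ ∈ Minv := (hcrit β hβ0).mp hle
    rw [← hMeq] at hβM
    obtain ⟨a, b, hab⟩ := Submodule.mem_span_pair.mp hβM
    by_cases hb : b = 0
    · refine ⟨none, ?_⟩
      apply Subtype.ext
      rw [hgval]
      subst hb
      rw [zero_smul, add_zero, Algebra.smul_def, mul_one] at hab
      have ha0 : a ≠ 0 := by
        rintro rfl
        rw [map_zero] at hab
        exact inv_ne_zero hβ0 hab.symm
      have hβeq : β = a⁻¹ • (1 : K) := by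
        rw [Algebra.smul_def, mul_one, map_inv₀, hab, inv_inv]
      show Submodule.span F {(1 : K)} = Submodule.span F {β}
      rw [hβeq, Submodule.span_singleton_smul_eq (IsUnit.inv (Ne.isUnit ha0)) 1]
    · refine ⟨some (b⁻¹ * a), ?_⟩
      apply Subtype.ext
      rw [hgval]
      have hβeq : β = b⁻¹ • bb (b⁻¹ * a) := by
        have hAb : algebraMap F K b ≠ 0 := fun h =>
          hb ((algebraMap F K).injective (h.trans (map_zero _).symm))
        have h1 : β⁻¹ = b • (algebraMap F K (b⁻¹ * a) + α⁻¹) := by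
          rw [← hab]
          simp only [Algebra.smul_def, mul_one, map_mul, map_inv₀, mul_add]
          field_simp
        rw [← inv_inv β, h1, Algebra.smul_def, mul_inv, ← map_inv₀, ← Algebra.smul_def]
      show Submodule.span F {bb (b⁻¹ * a)} = Submodule.span F {β}
      rw [hβeq, Submodule.span_singleton_smul_eq (IsUnit.inv (Ne.isUnit hb)) _]
  have hcard : Nat.card S = Nat.card (Option F) :=
    Nat.card_congr (Equiv.ofBijective g ⟨ginj, gsurj⟩).symm
  show Nat.card S = q + 1
  rw [hcard, Nat.card_eq_fintype_card, Fintype.card_option, hq]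
end

section
/- Let U and V be distinct k-dimensional F_q-subspaces of F_{q^n}. Then dim_{F_q}(U ∩ αV) ≤ 1 for all α ∈ F_{q^n}^* if and only if U and V have the two-space Sidon property: for all a,c ∈ U∖0 and b,d ∈ V∖0 with ab = cd one has aF_q^* = cF_q^* and bF_q^* = dF_q^*. -/
/-- Two distinct `k`-dimensional subspaces `U, V` satisfy `dim(U ∩ αV) ≤ 1` for
all `α ∈ F_{q^n}^*` iff they have the two-space Sidon property. -/
theorem stmt_18 (F K : Type) [Field F] [Field K] [Algebra F K]
    [Fintype F] [Fintype K] (q n k : ℕ)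
    (hq : Fintype.card F = q) (hn : Module.finrank F K = n)
    (U V : Submodule F K) (hUV : U ≠ V)
    (hkU : Module.finrank F U = k) (hkV : Module.finrank F V = k) :
    (∀ α : K, α ≠ 0 →
      Module.finrank F ↥(U ⊓ Submodule.map (LinearMap.mulLeft F α) V) ≤ 1) ↔
    (∀ a c : K, a ∈ U → c ∈ U → ∀ b d : K, b ∈ V → d ∈ V →
      a ≠ 0 → b ≠ 0 → c ≠ 0 → d ≠ 0 → a * b = c * d →
      (∃ μ : F, μ ≠ 0 ∧ a = μ • c) ∧ (∃ ν : F, ν ≠ 0 ∧ b = ν • d)) := by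
  have hFD : FiniteDimensional F K := Module.finite_iff_finite.mpr inferInstance
  constructor
  · intro h a c ha hc b d hb hd ha0 hb0 hc0 hd0 habcd
    set α := c / b with hα
    have hα0 : α ≠ 0 := div_ne_zero hc0 hb0
    set W := U ⊓ Submodule.map (LinearMap.mulLeft F α) V with hW
    have hcW : c ∈ W := by
      refine ⟨hc, ⟨b, hb, ?_⟩⟩
      show α * b = c
      rw [hα, div_mul_cancel₀ _ hb0]
    have haW : a ∈ W := by
      refine ⟨ha, ⟨d, hd, ?_⟩⟩
      show α * d = a
      rw [hα, div_mul_eq_mul_div, div_eq_iff hb0]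
      linear_combination -habcd
    have hle : Submodule.span F {c} ≤ W := by
      rw [Submodule.span_le, Set.singleton_subset_iff]; exact hcW
    have hspan : Submodule.span F {c} = W := by
      apply Submodule.eq_of_le_of_finrank_le hle
      rw [finrank_span_singleton hc0]
      exact h α hα0
    rw [← hspan] at haW
    obtain ⟨μ, hμ⟩ := Submodule.mem_span_singleton.mp haW
    have hμ0 : μ ≠ 0 := by
      rintro rfl; rw [zero_smul] at hμ; exact ha0 hμ.symm
    refine ⟨⟨μ, hμ0, hμ.symm⟩, ⟨μ⁻¹, inv_ne_zero hμ0, ?_⟩⟩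
    have : c * (μ • b) = c * d := by
      rw [mul_smul_comm, ← smul_mul_assoc, hμ, habcd]
    have hbd : μ • b = d := mul_left_cancel₀ hc0 this
    rw [← hbd, smul_smul, inv_mul_cancel₀ hμ0, one_smul]
  · intro h α hα0
    set W := U ⊓ Submodule.map (LinearMap.mulLeft F α) V with hW
    by_cases hbot : W = ⊥
    · rw [hbot]; simp
    · obtain ⟨z, hzW, hz0⟩ := Submodule.exists_mem_ne_zero_of_ne_bot hbot
      have hle : W ≤ Submodule.span F {z} := by
        intro x hx
        by_cases hx0 : x = 0
        · rw [hx0]; exact Submodule.zero_mem _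
        · obtain ⟨hxU, bx, hbx, hbxeq⟩ := hx
          obtain ⟨hzU, dz, hdz, hdzeq⟩ := hzW
          simp only [LinearMap.mulLeft_apply] at hbxeq hdzeq
          have hbx0 : bx ≠ 0 := by
            rintro rfl; rw [mul_zero] at hbxeq; exact hx0 hbxeq.symm
          have hdz0 : dz ≠ 0 := by
            rintro rfl; rw [mul_zero] at hdzeq; exact hz0 hdzeq.symm
          have hxz : x * dz = z * bx := by
            rw [← hbxeq, ← hdzeq]; ring
          obtain ⟨⟨μ, hμ0, hμ⟩, _⟩ :=
            h x z hxU hzU dz bx hdz hbx hx0 hdz0 hz0 hbx0 hxz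
          exact Submodule.mem_span_singleton.mpr ⟨μ, hμ.symm⟩
      calc Module.finrank F ↥W ≤ Module.finrank F ↥(Submodule.span F {z}) :=
            Submodule.finrank_mono hle
        _ = 1 := finrank_span_singleton hz0
end
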